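/- arXiv:2001.00992 — 6 statements merged into one kernel-verified Lean document; each statement's English description precedes it below -/
import Mathlib

section
/- Let G be a graph with matching number m and connectivity κ ≥ 2 satisfying m ≤ κ. If G is not Hamiltonian, C is a longest cycle in G, x₀ ∉ V(C), and P₁,...,Pₛ are internally disjoint paths from x₀ to V(C) with endpoints u₁,...,uₛ on C (s ≥ κ), then the set {x₀, u₁⁺, u₂⁺, ..., uₛ⁺} is independent in G, where uᵢ⁺ denotes the successor of uᵢ along a fixed orientation of C. -/
/-!
Let `c` be a longest cycle and orient it. If `x₀` were adjacent to `uᵢ⁺`, then walking from `uᵢ⁺`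
around `c` to `uᵢ`, back along `Pᵢ` to `x₀` and closing with the edge `x₀uᵢ⁺` would give a cycle
longer than `c`. If `uᵢ⁺` were adjacent to `uⱼ⁺`, delete the edges `uᵢuᵢ⁺` and `uⱼuⱼ⁺` from `c`
and reconnect the two resulting segments through `Pᵢ`, `Pⱼ` and the edge `uᵢ⁺uⱼ⁺`: again a cycle
longer than `c`, since `Pᵢ` and `Pⱼ` each have length at least one.
-/

open SimpleGraph Finset

/-- The matching number of a graph: the largest size of a matching. -/
noncomputable def matchingNumber {V : Type*} [Fintype V] (G : SimpleGraph V) : ℕ :=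
  sSup {n | ∃ M : G.Subgraph, M.IsMatching ∧ M.edgeSet.ncard = n}

/-- The vertex connectivity of a finite graph: the least size of a set `S` of vertices
whose removal either disconnects the graph or leaves at most one vertex. -/
noncomputable def vertexConnectivity {V : Type*} [Fintype V] (G : SimpleGraph V) : ℕ :=
  sInf {k | ∃ S : Finset V, S.card = k ∧
    (¬ (G.induce ((↑S : Set V)ᶜ)).Connected ∨ Fintype.card V ≤ k + 1)}

/-- `b` is the successor of `a` along the closed walk `c` (with its fixed orientation). -/
def IsCycleSucc {V : Type*} {G : SimpleGraph V} {v : V} (c : G.Walk v v) (a b : V) : Prop :=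
  ∃ k < c.length, c.getVert k = a ∧ c.getVert (k + 1) = b

/-- The family `F` of graphs `H` with `K_{p,q} ⊆ H ⊆ K_p ∨ (q·K_1)` for some `q ≥ p + 1 ≥ 3`:
the vertices split into a set `P` of size `p ≥ 2` and a set `Q` of size `q ≥ p + 1` such that
all `P`–`Q` edges are present and `Q` is independent. -/
def inFamilyF {V : Type*} [Fintype V] [DecidableEq V] (G : SimpleGraph V) : Prop :=
  ∃ P Q : Finset V, P ∪ Q = Finset.univ ∧ Disjoint P Q ∧
    Q.card ≥ P.card + 1 ∧ P.card ≥ 2 ∧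
    (∀ a ∈ P, ∀ b ∈ Q, G.Adj a b) ∧
    (∀ a ∈ Q, ∀ b ∈ Q, ¬ G.Adj a b)

namespace SimpleGraph.Walk

variable {V : Type*} {G : SimpleGraph V}

theorem IsPath.append {u v w : V} {p : G.Walk u v} {q : G.Walk v w} (hp : p.IsPath)
    (hq : q.IsPath) (h : ∀ x ∈ p.support, x ∈ q.support → x = v) : (p.append q).IsPath := by
  rw [isPath_def, support_append, List.nodup_append]
  have hq' := hq.support_nodup
  rw [← q.cons_tail_support, List.nodup_cons] at hq'
  refine ⟨hp.support_nodup, hq'.2, fun x hx y hy hxy => ?_⟩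
  subst hxy
  obtain rfl := h x hx (List.mem_of_mem_tail hy)
  exact hq'.1 hy

theorem length_pos_of_ne {u v : V} {p : G.Walk u v} (h : u ≠ v) : 0 < p.length :=
  not_nil_iff_lt_length.mp (not_nil_of_ne h)

theorem IsPath.isCycle_cons {u v : V} {p : G.Walk v u} (hp : p.IsPath) (h : G.Adj u v)
    (hlen : 2 ≤ p.length) : (cons h p).IsCycle :=
  (cons_isCycle_iff p h).mpr ⟨hp, fun he => by
    have hsnd := hp.eq_snd_of_mem_edges (Sym2.eq_swap ▸ he)
    have := (hp.getVert_eq_end_iff (i := 1) (by omega)).mp hsnd.symm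
    omega⟩

theorem exists_eq_append_cons_of_mem_darts {u v a b : V} {p : G.Walk u v} (h : G.Adj a b)
    (hd : ⟨(a, b), h⟩ ∈ p.darts) :
    ∃ (q : G.Walk u a) (r : G.Walk b v), p = q.append (cons h r) := by
  obtain ⟨q, r, rfl⟩ := (isSubwalk_toWalk_iff_mem_darts p h).mpr hd
  exact ⟨q, r, by rw [← append_assoc, Adj.toWalk, cons_append, nil_append]⟩

theorem IsPath.append_reroute {a' b b' a : V} {e : G.Walk a' b} {g : G.Walk b' a}
    {h : G.Adj b b'} (hr : (e.append (cons h g)).IsPath) {s : G.Walk b a} (hs : s.IsPath)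
    (hsr : ∀ w ∈ s.support, w ∈ (e.append (cons h g)).support → w = b ∨ w = a) :
    (e.append (s.append g.reverse)).IsPath := by
  have hnodup : (e.support ++ g.support).Nodup := by
    simpa only [support_append, support_cons, List.tail_cons] using hr.support_nodup
  have heg : ∀ w ∈ e.support, w ∉ g.support := fun w hwe hwg =>
    List.disjoint_of_nodup_append hnodup hwe hwg
  have hg := (cons_isPath_iff h g).mp hr.of_append_right
  have hsg : (s.append g.reverse).IsPath := by
    refine hs.append hg.1.reverse fun w hws hwg => ?_
    rw [support_reverse, List.mem_reverse] at hwg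
    have hwr : w ∈ (e.append (cons h g)).support :=
      (mem_support_append_iff _ _).mpr (.inr (List.mem_cons_of_mem _ hwg))
    exact (hsr w hws hwr).resolve_left fun hw => hg.2 (hw ▸ hwg)
  refine hr.of_append_left.append hsg fun w hwe hw => ?_
  rcases (mem_support_append_iff _ _).mp hw with hws | hwg
  · exact (hsr w hws ((mem_support_append_iff _ _).mpr (.inl hwe))).resolve_right
      fun hwa => heg a (hwa ▸ hwe) g.end_mem_support
  · exact absurd (by simpa using hwg) (heg w hwe)

theorem IsCycle.exists_isPath_of_mem_darts {v a b : V} {c : G.Walk v v} (hc : c.IsCycle)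
    (h : G.Adj a b) (hd : ⟨(a, b), h⟩ ∈ c.darts) :
    ∃ r : G.Walk b a, r.IsPath ∧ r.length + 1 = c.length ∧ r.support ⊆ c.support ∧
      ∀ d ∈ c.darts, d ≠ ⟨(a, b), h⟩ → d ∈ r.darts := by
  obtain ⟨p, q, rfl⟩ := exists_eq_append_cons_of_mem_darts h hd
  refine ⟨q.append p, ?_, by simp only [length_append, length_cons]; omega, ?_, ?_⟩
  · have hnodup := hc.support_nodup
    rw [tail_support_append, support_cons, List.tail_cons] at hnodup
    rw [isPath_def, support_append]
    exact List.perm_append_comm.nodup_iff.mp hnodup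
  · intro x hx
    simp only [mem_support_append_iff, support_cons, List.mem_cons] at hx ⊢
    tauto
  · intro d hd hne
    simp only [darts_append, darts_cons, List.mem_append, List.mem_cons] at hd ⊢
    tauto

end SimpleGraph.Walk

section LongestCycle

open Walk

variable {V : Type*} {G : SimpleGraph V}

theorem IsCycleSucc.exists_mem_darts {v a b : V} {c : G.Walk v v} (hs : IsCycleSucc c a b) :
    ∃ h : G.Adj a b, ⟨(a, b), h⟩ ∈ c.darts := by
  obtain ⟨k, hk, rfl, rfl⟩ := hs
  have hk' : k < c.darts.length := by rwa [length_darts]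
  exact ⟨_, darts_getElem_eq_getVert k hk' ▸ List.getElem_mem hk'⟩

theorem exists_longer_cycle_of_adj_succ {v x u u' : V} {c : G.Walk v v} (hc : c.IsCycle)
    (hx : x ∉ c.support) (hu : u ∈ c.support) {p : G.Walk x u} (hp : p.IsPath)
    (hpc : ∀ w ∈ p.support, w ∈ c.support → w = u) (hs : IsCycleSucc c u u')
    (hadj : G.Adj x u') :
    ∃ (w : V) (d : G.Walk w w), d.IsCycle ∧ c.length < d.length := by
  obtain ⟨h, hd⟩ := hs.exists_mem_darts
  obtain ⟨r, hr, hrlen, hrc, -⟩ := hc.exists_isPath_of_mem_darts h hd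
  have hplen : 0 < p.length := length_pos_of_ne (ne_of_mem_of_not_mem hu hx).symm
  have hpath : (r.append p.reverse).IsPath := by
    refine hr.append hp.reverse fun w hwr hwp => hpc w ?_ (hrc hwr)
    rwa [support_reverse, List.mem_reverse] at hwp
  have := hc.three_le_length
  refine ⟨x, cons hadj (r.append p.reverse), hpath.isCycle_cons hadj ?_, ?_⟩ <;>
    simp only [length_cons, length_append, length_reverse] <;> omega

theorem exists_longer_cycle_of_adj_succ_succ {v x ui uj ui' uj' : V} {c : G.Walk v v}
    (hc : c.IsCycle) (hx : x ∉ c.support) (hui : ui ∈ c.support) (huj : uj ∈ c.support)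
    (hne : ui ≠ uj) {pi : G.Walk x ui} {pj : G.Walk x uj} (hpi : pi.IsPath) (hpj : pj.IsPath)
    (hdisj : ∀ w ∈ pi.support, w ∈ pj.support → w = x)
    (hpic : ∀ w ∈ pi.support, w ∈ c.support → w = ui)
    (hpjc : ∀ w ∈ pj.support, w ∈ c.support → w = uj)
    (hsi : IsCycleSucc c ui ui') (hsj : IsCycleSucc c uj uj') (hadj : G.Adj ui' uj') :
    ∃ (w : V) (d : G.Walk w w), d.IsCycle ∧ c.length < d.length := by
  obtain ⟨hi, hdi⟩ := hsi.exists_mem_darts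
  obtain ⟨hj, hdj⟩ := hsj.exists_mem_darts
  obtain ⟨r, hr, hrlen, hrc, hrdarts⟩ := hc.exists_isPath_of_mem_darts hi hdi
  obtain ⟨e, g, rfl⟩ := exists_eq_append_cons_of_mem_darts hj
    (hrdarts _ hdj fun h => hne (congrArg (·.fst) h).symm)
  have hpath : (e.append ((pj.reverse.append pi).append g.reverse)).IsPath := by
    have hs : (pj.reverse.append pi).IsPath :=
      hpj.reverse.append hpi fun w hwj hwi => hdisj w hwi (by simpa using hwj)
    refine hr.append_reroute hs fun w hw hwr => ?_
    rcases (mem_support_append_iff _ _).mp hw with hw | hw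
    · exact .inl (hpjc w (by simpa using hw) (hrc hwr))
    · exact .inr (hpic w hw (hrc hwr))
  have hpilen : 0 < pi.length := length_pos_of_ne (ne_of_mem_of_not_mem hui hx).symm
  have hpjlen : 0 < pj.length := length_pos_of_ne (ne_of_mem_of_not_mem huj hx).symm
  simp only [length_append, length_cons] at hrlen
  refine ⟨uj', cons hadj.symm _, hpath.isCycle_cons hadj.symm ?_, ?_⟩ <;>
    simp only [length_cons, length_append, length_reverse] <;> omega

end LongestCycle

theorem stmt_1_general {V : Type*} (G : SimpleGraph V)
    {v : V} (c : G.Walk v v) (hc : c.IsCycle)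
    (hlong : ∀ (w : V) (d : G.Walk w w), d.IsCycle → d.length ≤ c.length)
    (x₀ : V) (hx₀ : x₀ ∉ c.support)
    (s : ℕ)
    (u : Fin s → V) (huinj : Function.Injective u)
    (humem : ∀ i, u i ∈ c.support)
    (P : ∀ i : Fin s, G.Walk x₀ (u i)) (hP : ∀ i, (P i).IsPath)
    (hdisj : ∀ i j, i ≠ j → ∀ w, w ∈ (P i).support → w ∈ (P j).support → w = x₀)
    (honC : ∀ i, ∀ w ∈ (P i).support, w ∈ c.support → w = u i)
    (usucc : Fin s → V) (hsucc : ∀ i, IsCycleSucc c (u i) (usucc i)) :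
    ∀ a ∈ ({x₀} ∪ Set.range usucc : Set V), ∀ b ∈ ({x₀} ∪ Set.range usucc : Set V),
      ¬ G.Adj a b := by
  intro a ha b hb hadj
  obtain ⟨w, d, hd, hlt⟩ : ∃ (w : V) (d : G.Walk w w), d.IsCycle ∧ c.length < d.length := by
    simp only [Set.mem_union, Set.mem_singleton_iff, Set.mem_range] at ha hb
    rcases ha with rfl | ⟨i, rfl⟩ <;> rcases hb with rfl | ⟨j, rfl⟩
    · exact (hadj.ne rfl).elim
    · exact exists_longer_cycle_of_adj_succ hc hx₀ (humem j) (hP j) (honC j) (hsucc j) hadj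
    · exact exists_longer_cycle_of_adj_succ hc hx₀ (humem i) (hP i) (honC i) (hsucc i) hadj.symm
    · have hij : i ≠ j := by rintro rfl; exact hadj.ne rfl
      exact exists_longer_cycle_of_adj_succ_succ hc hx₀ (humem i) (humem j)
        (huinj.ne hij) (hP i) (hP j) (hdisj i j hij) (honC i) (honC j) (hsucc i) (hsucc j) hadj
  exact (hlong w d hd).not_gt hlt

/-- The set `{x₀, u₁⁺, …, uₛ⁺}` is independent in `G`. -/
theorem stmt_1 {V : Type*} [Fintype V] [DecidableEq V] (G : SimpleGraph V)
    (hκ : 2 ≤ vertexConnectivity G)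
    (hm : matchingNumber G ≤ vertexConnectivity G)
    (hnotham : ¬ G.IsHamiltonian)
    {v : V} (c : G.Walk v v) (hc : c.IsCycle)
    (hlong : ∀ (w : V) (d : G.Walk w w), d.IsCycle → d.length ≤ c.length)
    (x₀ : V) (hx₀ : x₀ ∉ c.support)
    (s : ℕ) (hs : vertexConnectivity G ≤ s)
    (u : Fin s → V) (huinj : Function.Injective u)
    (humem : ∀ i, u i ∈ c.support)
    (P : ∀ i : Fin s, G.Walk x₀ (u i)) (hP : ∀ i, (P i).IsPath)
    (hdisj : ∀ i j, i ≠ j → ∀ w, w ∈ (P i).support → w ∈ (P j).support → w = x₀)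
    (honC : ∀ i, ∀ w ∈ (P i).support, w ∈ c.support → w = u i)
    (usucc : Fin s → V) (hsucc : ∀ i, IsCycleSucc c (u i) (usucc i)) :
    ∀ a ∈ ({x₀} ∪ Set.range usucc : Set V), ∀ b ∈ ({x₀} ∪ Set.range usucc : Set V),
      ¬ G.Adj a b :=
  stmt_1_general G c hc hlong x₀ hx₀ s u huinj humem P hP hdisj honC usucc hsucc
end

section
/- Let G be a non-Hamiltonian graph with κ(G) = m(G) = s ≥ 2, C a longest cycle with fixed orientation, and x₀ ∉ V(C) joined to C by s internally disjoint paths ending at u₁,...,uₛ appearing in this cyclic order on C. Then u_{i+1} = uᵢ⁺⁺ for each i (indices mod s); that is, C = u₁ u₁⁺ u₂ u₂⁺ ⋯ uₛ uₛ⁺ u₁ has exactly 2s vertices. -/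
open SimpleGraph Finset

/-!
Index `C` periodically and let `k i` be the position of `uᵢ`. No two endpoints `uᵢ`,
`uⱼ` are consecutive on `C`: otherwise replacing the edge `uᵢuⱼ` by the path `uᵢ ⋯ x₀ ⋯ uⱼ` gives a
longer cycle. Consequently `uᵢ⁺⁺` is no `uⱼ⁺`, and if it were no `uⱼ` either, the edges `uⱼuⱼ⁺`
(`j ≠ i`), `uᵢ⁺uᵢ⁺⁺` and `x₀y` (with `y` the neighbour of `x₀` on `Pᵢ`) would form a matching of
size `s + 1`. So every `uᵢ⁺⁺` is some `uⱼ` while every `uᵢ⁺` is not, which forces consecutive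
positions `k i` to differ by exactly `2` all around the cycle.
-/
namespace SimpleGraph.Walk

variable {V : Type*} {G : SimpleGraph V}

theorem IsPath.start_notMem_tail_support {u v : V} {p : G.Walk u v} (hp : p.IsPath) :
    u ∉ p.support.tail :=
  (List.nodup_cons.1 (p.cons_tail_support ▸ hp.support_nodup)).1

theorem IsPath.append_of_inter {u v w : V} {p : G.Walk u v} {q : G.Walk v w} (hp : p.IsPath)
    (hq : q.IsPath) (hpq : ∀ x ∈ p.support, x ∈ q.support → x = v) : (p.append q).IsPath := by
  rw [isPath_def, support_append, List.nodup_append]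
  refine ⟨hp.support_nodup, hq.support_nodup.sublist (List.tail_sublist _), ?_⟩
  rintro x hx _ hy rfl
  exact hq.start_notMem_tail_support (hpq x hx (List.mem_of_mem_tail hy) ▸ hy)

theorem IsCycle.isPath_drop_append_take {u : V} {c : G.Walk u u} (hc : c.IsCycle) {m : ℕ}
    (hm : m < c.length) : ((c.drop (m + 1)).append (c.take m)).IsPath := by
  refine (hc.isPath_drop m.succ_pos).append_of_inter (hc.isPath_take hm) fun x hx hx' ↦ ?_
  obtain ⟨i, rfl, hi⟩ := mem_support_iff_exists_getVert.1 hx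
  obtain ⟨j, hj, hj'⟩ := mem_support_iff_exists_getVert.1 hx'
  simp only [drop_getVert, take_getVert, drop_length, take_length] at hi hj hj' ⊢
  by_contra hne
  have hlt : m + 1 + i < c.length := by
    refine lt_of_le_of_ne (by omega) fun h ↦ hne ?_
    rw [h, getVert_length]
  have := hc.getVert_injOn' (by simp; omega) (by simp; omega) hj
  omega

theorem IsCycle.exists_isCycle_length_gt {u : V} {c : G.Walk u u} (hc : c.IsCycle) {m : ℕ}
    (hm : m < c.length) {r : G.Walk (c.getVert m) (c.getVert (m + 1))} (hr : r.IsPath)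
    (hrc : ∀ x ∈ r.support, x ∈ c.support → x = c.getVert m ∨ x = c.getVert (m + 1))
    (hl : 2 ≤ r.length) : ∃ (w : V) (d : G.Walk w w), d.IsCycle ∧ c.length < d.length := by
  set t := (c.drop (m + 1)).append (c.take m)
  have ht := hc.isPath_drop_append_take hm
  have hsub : t.support ⊆ c.support := by
    intro x hx
    rcases (mem_support_append_iff _ _).1 hx with hx | hx
    · exact (isSubwalk_drop c _).support_subset hx
    · exact (isSubwalk_take c _).support_subset hx
  refine ⟨_, _, ht.isCycle_append hr (fun x hx hx' ↦ ?_) (by omega), ?_⟩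
  · rcases hrc x (List.mem_of_mem_tail hx') (hsub (List.mem_of_mem_tail hx)) with rfl | rfl
    · exact hr.start_notMem_tail_support hx'
    · exact ht.start_notMem_tail_support hx
  · simp only [length_append, drop_length, take_length]
    omega

variable {u : V} (c : G.Walk u u)

-- `getVert` itself is not periodic: past `c.length` it stays at the endpoint.
def cycVert (m : ℕ) : V := c.getVert (m % c.length)

variable {c}

theorem cycVert_of_lt {m : ℕ} (hm : m < c.length) : c.cycVert m = c.getVert m := by
  rw [cycVert, Nat.mod_eq_of_lt hm]

theorem getVert_eq_cycVert {m : ℕ} (hm : m ≤ c.length) : c.getVert m = c.cycVert m := by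
  rcases hm.lt_or_eq with hm | rfl
  · exact (cycVert_of_lt hm).symm
  · rw [cycVert, Nat.mod_self, getVert_length, getVert_zero]

theorem cycVert_mem_support (m : ℕ) : c.cycVert m ∈ c.support := c.getVert_mem_support _

theorem cycVert_succ_eq_getVert (hc : ¬ c.Nil) (m : ℕ) :
    c.cycVert (m + 1) = c.getVert (m % c.length + 1) := by
  have hm := Nat.mod_lt m (not_nil_iff_lt_length.1 hc)
  rw [getVert_eq_cycVert (m := m % c.length + 1) hm]
  exact congrArg c.getVert (Nat.mod_add_mod m _ 1).symm

theorem adj_cycVert_succ (hc : ¬ c.Nil) (m : ℕ) : G.Adj (c.cycVert m) (c.cycVert (m + 1)) := by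
  rw [cycVert_succ_eq_getVert hc]
  exact c.adj_getVert_succ (Nat.mod_lt m (not_nil_iff_lt_length.1 hc))

theorem IsCycle.cycVert_eq_cycVert_iff (hc : c.IsCycle) {a b : ℕ} :
    c.cycVert a = c.cycVert b ↔ a ≡ b [MOD c.length] := by
  have hn : 0 < c.length := by have := hc.three_le_length; omega
  exact ⟨fun h ↦ hc.getVert_injOn' (Nat.le_sub_one_of_lt (Nat.mod_lt a hn))
    (Nat.le_sub_one_of_lt (Nat.mod_lt b hn)) h, congrArg c.getVert⟩

theorem IsCycle.cycVert_succ_ne_of_longest {x a b : V} (hc : c.IsCycle)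
    (hlong : ∀ (w : V) (d : G.Walk w w), d.IsCycle → d.length ≤ c.length) (hx : x ∉ c.support)
    {p : G.Walk x a} {q : G.Walk x b} (hp : p.IsPath) (hq : q.IsPath)
    (hpq : ∀ w ∈ p.support, w ∈ q.support → w = x)
    (hpc : ∀ w ∈ p.support, w ∈ c.support → w = a) (hqc : ∀ w ∈ q.support, w ∈ c.support → w = b)
    {m : ℕ} (ha : c.cycVert m = a) : c.cycVert (m + 1) ≠ b := by
  intro hb
  have hm := Nat.mod_lt m (not_nil_iff_lt_length.1 hc.not_nil)
  replace ha : c.getVert (m % c.length) = a := ha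
  rw [cycVert_succ_eq_getVert hc.not_nil] at hb
  have hpl : 1 ≤ p.length := Nat.one_le_iff_ne_zero.2 fun h ↦
    hx (eq_of_length_eq_zero h ▸ ha ▸ c.getVert_mem_support _)
  have hql : 1 ≤ q.length := Nat.one_le_iff_ne_zero.2 fun h ↦
    hx (eq_of_length_eq_zero h ▸ hb ▸ c.getVert_mem_support _)
  subst ha hb
  obtain ⟨w, d, hd, hlt⟩ := hc.exists_isCycle_length_gt hm (r := p.reverse.append q)
    (hp.reverse.append_of_inter hq fun w hw ↦
      hpq w (by rwa [support_reverse, List.mem_reverse] at hw))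
    (fun w hw hwc ↦ (mem_support_append_iff _ _).1 hw |>.imp
      (fun hw ↦ hpc w (by rwa [support_reverse, List.mem_reverse] at hw) hwc)
      (fun hw ↦ hqc w hw hwc))
    (by simp only [length_append, length_reverse]; omega)
  exact (hlong w d hd).not_gt hlt

end SimpleGraph.Walk

open SimpleGraph.Walk

theorem isCycleSucc_iff {V : Type*} {G : SimpleGraph V} {u a b : V} {c : G.Walk u u}
    (hc : ¬ c.Nil) : IsCycleSucc c a b ↔ ∃ m, c.cycVert m = a ∧ c.cycVert (m + 1) = b := by
  refine ⟨fun ⟨m, hm, ha, hb⟩ ↦ ⟨m, (cycVert_of_lt hm).trans ha, ?_⟩,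
    fun ⟨m, ha, hb⟩ ↦ ⟨m % c.length, Nat.mod_lt m (not_nil_iff_lt_length.1 hc), ha, ?_⟩⟩
  · rw [← hb, getVert_eq_cycVert hm]
  · rw [← hb, cycVert_succ_eq_getVert hc]

theorem le_matchingNumber_of_injective {V ι : Type*} [Fintype V] {G : SimpleGraph V}
    {a b : ι → V} (ha : a.Injective) (hb : b.Injective) (hab : ∀ i j, a i ≠ b j)
    (hadj : ∀ i, G.Adj (a i) (b i)) : Nat.card ι ≤ matchingNumber G := by
  have : Finite ι := Finite.of_injective a ha
  let M : G.Subgraph := ⨆ i, G.subgraphOfAdj (hadj i)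
  have hM : M.IsMatching := by
    refine Subgraph.IsMatching.iSup (fun i ↦ Subgraph.IsMatching.subgraphOfAdj _) fun i j hij ↦ ?_
    dsimp only
    rw [support_subgraphOfAdj, support_subgraphOfAdj, Set.disjoint_left]
    rintro _ (rfl | rfl) (h | h)
    exacts [hij (ha h), hab i j h, hab j i h.symm, hij (hb h)]
  have hcard : M.edgeSet.ncard = Nat.card ι := by
    have hE : M.edgeSet = Set.range fun i ↦ s(a i, b i) := by
      ext e
      simp [M, Subgraph.edgeSet_iSup, eq_comm]
    rw [hE, Set.ncard_range_of_injective fun i j h ↦ ?_]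
    rcases Sym2.eq_iff.1 h with ⟨h, -⟩ | ⟨h, -⟩
    · exact ha h
    · exact (hab i j h).elim
  unfold matchingNumber
  refine le_csSup ⟨(Set.univ : Set (Sym2 V)).ncard, ?_⟩ ⟨M, hM, hcard⟩
  rintro n ⟨M', -, rfl⟩
  exact Set.ncard_le_ncard (Set.subset_univ _)

theorem exists_eq_of_matchingNumber_le {V : Type*} [Fintype V] {G : SimpleGraph V} {s : ℕ}
    (hG : matchingNumber G ≤ s) {u w : Fin s → V} (hu : u.Injective) (hw : w.Injective)
    (huw : ∀ i j, u i ≠ w j) (hadj : ∀ i, G.Adj (w i) (u i)) {S : Set V}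
    (huS : ∀ i, u i ∈ S) (hwS : ∀ i, w i ∈ S) {i₀ : Fin s} {x y z : V} (hxy : G.Adj x y)
    (hwz : G.Adj (w i₀) z) (hx : x ∉ S) (hy : y ∈ S → y = u i₀) (hz : z ∈ S) :
    (∃ i, z = u i) ∨ (∃ i, z = w i) := by
  -- otherwise `x y`, `w i₀ z` and the `w i u i` with `i ≠ i₀` form a matching of size `s + 1`
  by_contra! h
  obtain ⟨hzu, hzw⟩ := h
  set u' := Function.update u i₀ z
  have hu'S : ∀ i, u' i ∈ S := fun i ↦ by
    by_cases hi : i = i₀ <;> simp [u', hi, hz, huS]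
  have hu' : u'.Injective := fun i j hij ↦ by
    by_cases hi : i = i₀ <;> by_cases hj : j = i₀ <;>
      simp_all [u', Function.update_apply, hu.eq_iff, eq_comm]
  have hyu' : ∀ i, y ≠ u' i := fun i hyi ↦ by
    have := hy (hyi ▸ hu'S i)
    by_cases hi : i = i₀ <;> simp_all [u', Function.update_apply, hu.eq_iff]
  have hwu' : ∀ i j, w i ≠ u' j := fun i j ↦ by
    by_cases hj : j = i₀ <;> simp [u', hj, Ne.symm (huw _ _), Ne.symm (hzw _)]
  have := le_matchingNumber_of_injective (G := G) (a := Fin.cons x w) (b := Fin.cons y u')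
    (Fin.cons_injective_iff.2 ⟨fun ⟨i, hi⟩ ↦ hx (hi ▸ hwS i), hw⟩)
    (Fin.cons_injective_iff.2 ⟨fun ⟨i, hi⟩ ↦ hyu' i hi.symm, hu'⟩)
    (fun i j ↦ by
      cases i using Fin.cases <;> cases j using Fin.cases <;>
        simp only [Fin.cons_zero, Fin.cons_succ]
      · exact hxy.ne
      · exact fun h ↦ hx (h ▸ hu'S _)
      · exact fun h ↦ huw i₀ _ ((hy (h ▸ hwS _)).symm.trans h.symm)
      · exact hwu' _ _)
    (fun i ↦ by
      cases i using Fin.cases with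
      | zero => exact hxy
      | succ i => by_cases hi : i = i₀ <;> simp [u', hi, hwz, hadj])
  simp only [Nat.card_eq_fintype_card, Fintype.card_fin] at this
  omega

theorem strictMono_succ_eq_add_two {n s : ℕ} {k : Fin s → ℕ} (hk : StrictMono k)
    (hkn : ∀ i, k i < n) (h1 : ∀ i j, ¬ k i + 1 ≡ k j [MOD n])
    (h2 : ∀ i, ∃ j, k i + 2 ≡ k j [MOD n]) (i : ℕ) (hi : i + 1 < s) :
    k ⟨i + 1, hi⟩ = k ⟨i, by omega⟩ + 2 := by
  have hlt : k ⟨i, by omega⟩ < k ⟨i + 1, hi⟩ := hk (Fin.mk_lt_mk.2 i.lt_succ_self)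
  have hne : k ⟨i, by omega⟩ + 1 ≠ k ⟨i + 1, hi⟩ := fun h ↦ h1 _ _ (by rw [h])
  have hkn' := hkn ⟨i + 1, hi⟩
  obtain ⟨j, hj⟩ := h2 ⟨i, by omega⟩
  by_contra hne'
  have hj' := hj.eq_of_lt_of_lt (by omega) (hkn j)
  have h₁ := hk.lt_iff_lt.1 (show k ⟨i, by omega⟩ < k j by omega)
  have h₂ := hk.lt_iff_lt.1 (show k j < k ⟨i + 1, hi⟩ by omega)
  rw [Fin.lt_def] at h₁ h₂
  simp only at h₁ h₂
  omega

theorem strictMono_last_add_two_eq {n s : ℕ} (hs : 0 < s) {k : Fin s → ℕ} (hk : StrictMono k)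
    (hkn : ∀ i, k i < n) (h1 : ∀ i j, ¬ k i + 1 ≡ k j [MOD n])
    (h2 : ∀ i, ∃ j, k i + 2 ≡ k j [MOD n]) :
    k ⟨s - 1, by omega⟩ + 2 = k ⟨0, hs⟩ + n := by
  have hmin : ∀ j, k ⟨0, hs⟩ ≤ k j := fun j ↦ hk.monotone (Fin.mk_le_mk.2 j.val.zero_le)
  have hmax : ∀ j, k j ≤ k ⟨s - 1, by omega⟩ :=
    fun j ↦ hk.monotone (show j ≤ ⟨s - 1, _⟩ from Fin.mk_le_mk.2 (by omega))
  have hkn' := hkn ⟨s - 1, by omega⟩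
  have hne : k ⟨s - 1, by omega⟩ + 1 ≠ k ⟨0, hs⟩ + n :=
    fun h ↦ h1 ⟨s - 1, by omega⟩ ⟨0, hs⟩ (by rw [h]; exact Nat.add_modEq_right)
  obtain ⟨j, hj⟩ := h2 ⟨s - 1, by omega⟩
  have := hmin j
  have := hmax j
  by_contra hne'
  rcases lt_or_ge (k ⟨s - 1, by omega⟩ + 2) n with hlt | hge
  · have := hj.eq_of_lt_of_lt hlt (hkn j)
    omega
  · have hsub : k ⟨s - 1, by omega⟩ + 2 - n + n = k ⟨s - 1, by omega⟩ + 2 := by omega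
    have := (Nat.add_modEq_right.symm.trans (hsub ▸ hj)).eq_of_lt_of_lt (by omega) (hkn j)
    omega

theorem strictMono_modEq_next {n s : ℕ} (hs : 0 < s) {k : Fin s → ℕ} (hk : StrictMono k)
    (hkn : ∀ i, k i < n) (h1 : ∀ i j, ¬ k i + 1 ≡ k j [MOD n])
    (h2 : ∀ i, ∃ j, k i + 2 ≡ k j [MOD n]) :
    (∀ i : Fin s, k i + 2 ≡ k ⟨(i + 1) % s, Nat.mod_lt _ hs⟩ [MOD n]) ∧ n = 2 * s := by
  have hstep := strictMono_succ_eq_add_two hk hkn h1 h2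
  have hwrap := strictMono_last_add_two_eq hs hk hkn h1 h2
  have hpos : ∀ j (hj : j < s), k ⟨j, hj⟩ = k ⟨0, hs⟩ + 2 * j := by
    intro j
    induction j with
    | zero => simp
    | succ j ih => intro hj; rw [hstep j hj, ih]; ring
  refine ⟨fun i ↦ ?_, by have := hpos (s - 1) (by omega); omega⟩
  rcases lt_or_ge (i.val + 1) s with hi | hi
  · rw [show (⟨(i + 1) % s, _⟩ : Fin s) = ⟨i + 1, hi⟩ from Fin.ext (Nat.mod_eq_of_lt hi),
      hstep i hi]
  · have hi' : i = ⟨s - 1, by omega⟩ := Fin.ext (by simp; omega)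
    have hwrap_idx : (⟨(i + 1) % s, Nat.mod_lt _ hs⟩ : Fin s) = ⟨0, hs⟩ :=
      Fin.ext (by simp [show i.val + 1 = s by omega])
    rw [hwrap_idx, hi', hwrap]
    exact Nat.add_modEq_right

/-- `u_{i+1} = uᵢ⁺⁺` for each `i` (indices mod `s`): the cycle is
`u₁ u₁⁺ u₂ u₂⁺ ⋯ uₛ uₛ⁺ u₁` and has exactly `2s` vertices. -/
theorem stmt_3 {V : Type*} [Fintype V] (G : SimpleGraph V)
    (s : ℕ) (hs : 2 ≤ s)
    (hm : matchingNumber G = s)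
    {v : V} (c : G.Walk v v) (hc : c.IsCycle)
    (hlong : ∀ (w : V) (d : G.Walk w w), d.IsCycle → d.length ≤ c.length)
    (x₀ : V) (hx₀ : x₀ ∉ c.support)
    (u : Fin s → V) (huinj : Function.Injective u)
    (humem : ∀ i, u i ∈ c.support)
    (P : ∀ i : Fin s, G.Walk x₀ (u i)) (hP : ∀ i, (P i).IsPath)
    (hdisj : ∀ i j, i ≠ j → ∀ w, w ∈ (P i).support → w ∈ (P j).support → w = x₀)
    (honC : ∀ i, ∀ w ∈ (P i).support, w ∈ c.support → w = u i)
    (horder : ∃ k : Fin s → ℕ, StrictMono k ∧ ∀ i, k i < c.length ∧ c.getVert (k i) = u i)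
    (usucc : Fin s → V) (hsucc : ∀ i, IsCycleSucc c (u i) (usucc i)) :
    (∀ i : Fin s,
      IsCycleSucc c (usucc i) (u ⟨(↑i + 1) % s, Nat.mod_lt _ (by omega)⟩)) ∧
    c.length = 2 * s := by
  obtain ⟨k, hk, hkc⟩ := horder
  have hu : ∀ i, c.cycVert (k i) = u i := fun i ↦ (cycVert_of_lt (hkc i).1).trans (hkc i).2
  have hmod : ∀ {a b}, c.cycVert a = c.cycVert b ↔ a ≡ b [MOD c.length] :=
    hc.cycVert_eq_cycVert_iff
  have hplus_ne : ∀ i j, c.cycVert (k i + 1) ≠ u j := by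
    intro i j
    rcases eq_or_ne i j with rfl | hij
    · exact hu i ▸ (c.adj_cycVert_succ hc.not_nil (k i)).ne'
    · exact hc.cycVert_succ_ne_of_longest hlong hx₀ (hP i) (hP j) (hdisj i j hij) (honC i)
        (honC j) (hu i)
  have hplus : ∀ i j, ¬ k i + 1 ≡ k j [MOD c.length] :=
    fun i j h ↦ hplus_ne i j (hu j ▸ hmod.2 h)
  have hplus_two : ∀ i, ∃ j, k i + 2 ≡ k j [MOD c.length] := by
    intro i
    have hPi : ¬ (P i).Nil := fun h ↦ hx₀ (h.eq ▸ humem i)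
    rcases exists_eq_of_matchingNumber_le (S := {w | w ∈ c.support}) hm.le huinj
      (fun a b h ↦ hk.injective ((hmod.1 h).add_right_cancel' 1 |>.eq_of_lt_of_lt
        (hkc a).1 (hkc b).1))
      (fun i j h ↦ hplus_ne j i h.symm)
      (fun t ↦ hu t ▸ (c.adj_cycVert_succ hc.not_nil (k t)).symm) humem
      (fun t ↦ c.cycVert_mem_support (k t + 1)) ((P i).adj_snd hPi)
      (c.adj_cycVert_succ hc.not_nil (k i + 1)) hx₀
      (honC i _ ((P i).getVert_mem_support 1)) (c.cycVert_mem_support _) with ⟨j, hj⟩ | ⟨j, hj⟩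
    · exact ⟨j, hmod.1 (hj.trans (hu j).symm)⟩
    · exact (hplus i j ((hmod.1 hj).add_right_cancel' 1)).elim
  obtain ⟨hnext, hlen⟩ := strictMono_modEq_next (by omega) hk (fun i ↦ (hkc i).1) hplus hplus_two
  refine ⟨fun i ↦ ?_, hlen⟩
  obtain ⟨m, hmi, hm1⟩ := (isCycleSucc_iff hc.not_nil).1 (hsucc i)
  refine (isCycleSucc_iff hc.not_nil).2 ⟨m + 1, hm1, ?_⟩
  rw [← hu, hmod]
  exact ((hmod.1 (hmi.trans (hu i).symm)).add_right 2).trans (hnext i)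
end

section
/- Let G be a non-Hamiltonian graph with κ(G) = m(G) = s ≥ 2, and let C be a longest cycle with a vertex x₀ outside C as above. Then the vertex set V(G) \ (V(C) ∪ {x₀}), if nonempty, is an independent set in G. -/
open SimpleGraph Finset

/-!
If two attachment vertices `uᵢ, uⱼ` were consecutive on `C`, replacing the edge `uᵢuⱼ` by the
two paths through `x₀` would give a longer cycle. Hence the successors `uᵢ⁺` on `C` are distinct
from all `uⱼ`, and `{uᵢuᵢ⁺}` is a matching of size `s` inside `C`. An edge `ab` with `a, b` off
`C ∪ {x₀}` would extend it to a matching of size `s + 1 > m(G)`.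
-/

namespace SimpleGraph

variable {V : Type*} {G : SimpleGraph V}

namespace Walk

lemma IsPath.ne_of_mem_support_tail {u v x : V} {p : G.Walk u v} (hp : p.IsPath)
    (hx : x ∈ p.support.tail) : x ≠ u := by
  rintro rfl
  have := hp.support_nodup
  rw [← cons_tail_support, List.nodup_cons] at this
  exact this.1 hx

lemma IsPath.reverse_append {x a b : V} {p : G.Walk x a} {q : G.Walk x b} (hp : p.IsPath)
    (hq : q.IsPath) (hpq : ∀ w ∈ p.support, w ∈ q.support → w = x) :
    (p.reverse.append q).IsPath := by
  rw [isPath_def, support_append, support_reverse, List.nodup_append]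
  refine ⟨List.nodup_reverse.mpr hp.support_nodup, hq.support_nodup.tail, ?_⟩
  rintro w hw _ hw' rfl
  exact hq.ne_of_mem_support_tail hw' (hpq w (List.mem_reverse.mp hw) (List.mem_of_mem_tail hw'))

lemma IsCycle.eq_snd_or_eq_penultimate_of_mem_edges {a b : V} {c : G.Walk a a} (hc : c.IsCycle)
    (h : s(a, b) ∈ c.edges) : b = c.snd ∨ b = c.penultimate := by
  have htail : ¬ c.tail.Nil := by
    rw [← length_eq_zero_iff]
    have := length_tail_add_one hc.not_nil
    have := hc.three_le_length
    omega
  rw [← c.cons_tail_eq hc.not_nil, edges_cons, List.mem_cons] at h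
  rcases h with h | h
  · exact .inl (Sym2.congr_right.mp h)
  · refine .inr ?_
    rw [hc.isPath_tail.eq_penultimate_of_mem_edges h]
    conv_rhs => rw [← c.cons_tail_eq hc.not_nil]
    exact (penultimate_cons_of_not_nil _ _ htail).symm

lemma IsCycle.exists_isPath_of_mem_edges [DecidableEq V] {v a b : V} {c : G.Walk v v}
    (hc : c.IsCycle) (h : s(a, b) ∈ c.edges) :
    ∃ q : G.Walk b a, q.IsPath ∧ q.length + 1 = c.length ∧ ∀ w ∈ q.support, w ∈ c.support := by
  set r := c.rotate a (c.fst_mem_support_of_mem_edges h)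
  suffices ∃ q : G.Walk b a, q.IsPath ∧ q.length + 1 = r.length ∧ ∀ w ∈ q.support, w ∈ r.support by
    simpa [r] using this
  have tail_spec (d : G.Walk a a) (hd : d.IsCycle) :
      ∃ q : G.Walk d.snd a, q.IsPath ∧ q.length + 1 = d.length ∧ ∀ w ∈ q.support, w ∈ d.support :=
    ⟨d.tail, hd.isPath_tail, length_tail_add_one hd.not_nil, fun w hw =>
      List.mem_of_mem_tail (d.support_tail_of_not_nil hd.not_nil ▸ hw)⟩
  have hr : r.IsCycle := hc.rotate _
  have hab : s(a, b) ∈ r.edges := (c.rotate_edges _ _).mem_iff.mpr h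
  clear_value r
  rcases hr.eq_snd_or_eq_penultimate_of_mem_edges hab with rfl | rfl
  · exact tail_spec r hr
  · obtain ⟨q, hq, hlen, hsupp⟩ := tail_spec r.reverse hr.reverse
    exact ⟨q.copy (snd_reverse r) rfl, by simpa using hq, by simpa using hlen,
      fun w hw => by simpa using hsupp w (by simpa using hw)⟩

lemma IsCycle.notMem_edges_of_forall_length_le [DecidableEq V] {v x a b : V} {c : G.Walk v v}
    (hc : c.IsCycle) (hlong : ∀ (w : V) (d : G.Walk w w), d.IsCycle → d.length ≤ c.length)
    (hx : x ∉ c.support) {p : G.Walk x a} {q : G.Walk x b} (hp : p.IsPath) (hq : q.IsPath)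
    (hpq : ∀ w ∈ p.support, w ∈ q.support → w = x)
    (hpc : ∀ w ∈ p.support, w ∈ c.support → w = a)
    (hqc : ∀ w ∈ q.support, w ∈ c.support → w = b) :
    s(a, b) ∉ c.edges := by
  intro hab
  obtain ⟨r, hr, hrlen, hrc⟩ := hc.exists_isPath_of_mem_edges hab
  have hpq' : (p.reverse.append q).IsPath := hp.reverse_append hq hpq
  have hcyc : ((p.reverse.append q).append r).IsCycle := by
    refine hpq'.isCycle_append hr (fun w hw hw' => ?_) (.inr (by have := hc.three_le_length; omega))
    have hwc := hrc w (List.mem_of_mem_tail hw')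
    rcases (mem_support_append_iff _ _).mp (List.mem_of_mem_tail hw) with hwp | hwq
    · exact hpq'.ne_of_mem_support_tail hw (hpc w (by simpa using hwp) hwc)
    · exact hr.ne_of_mem_support_tail hw' (hqc w hwq hwc)
  have hp0 : p.length ≠ 0 := fun h =>
    hx (eq_of_length_eq_zero h ▸ c.fst_mem_support_of_mem_edges hab)
  have hq0 : q.length ≠ 0 := fun h =>
    hx (eq_of_length_eq_zero h ▸ c.snd_mem_support_of_mem_edges hab)
  have := hlong a _ hcyc
  simp only [length_append, length_reverse] at this
  omega

end Walk

section CycleSucc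

variable {v a b : V} {c : G.Walk v v}

lemma exists_isCycleSucc (hc : ¬ c.Nil) (ha : a ∈ c.support) : ∃ b, IsCycleSucc c a b := by
  obtain ⟨n, rfl, hn⟩ := Walk.mem_support_iff_exists_getVert.mp ha
  rcases hn.lt_or_eq with hn | rfl
  · exact ⟨_, n, hn, rfl, rfl⟩
  · exact ⟨_, 0, Walk.not_nil_iff_lt_length.mp hc, by simp, rfl⟩

lemma IsCycleSucc.mem_edges (h : IsCycleSucc c a b) : s(a, b) ∈ c.edges := by
  obtain ⟨k, hk, rfl, rfl⟩ := h
  exact c.mk_mem_edges_iff_exists.mpr ⟨k, hk, rfl⟩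

lemma IsCycleSucc.adj (h : IsCycleSucc c a b) : G.Adj a b :=
  c.adj_of_mem_edges h.mem_edges

lemma IsCycleSucc.mem_support_right (h : IsCycleSucc c a b) : b ∈ c.support :=
  c.snd_mem_support_of_mem_edges h.mem_edges

lemma Walk.IsCycle.isCycleSucc_left_unique {a' : V} (hc : c.IsCycle) (h : IsCycleSucc c a b)
    (h' : IsCycleSucc c a' b) : a = a' := by
  obtain ⟨k, hk, rfl, hkb⟩ := h
  obtain ⟨k', hk', rfl, rfl⟩ := h'
  have : k + 1 = k' + 1 := hc.getVert_injOn ⟨by omega, by omega⟩ ⟨by omega, by omega⟩ hkb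
  rw [Nat.succ_injective this]

end CycleSucc

lemma Subgraph.IsMatching.ncard_edgeSet_le_matchingNumber [Fintype V] {M : G.Subgraph}
    (hM : M.IsMatching) : M.edgeSet.ncard ≤ matchingNumber G :=
  le_csSup ⟨Nat.card (Sym2 V), by rintro n ⟨N, -, rfl⟩; exact Set.ncard_le_card _⟩ ⟨M, hM, rfl⟩

lemma card_le_matchingNumber_of_pairwise_disjoint [Fintype V] {ι : Type*} (f g : ι → V)
    (hadj : ∀ i, G.Adj (f i) (g i))
    (hd : Pairwise fun i j => Disjoint ({f i, g i} : Set V) {f j, g j}) :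
    Nat.card ι ≤ matchingNumber G := by
  let M := ⨆ i, G.subgraphOfAdj (hadj i)
  have hM : M.IsMatching :=
    Subgraph.IsMatching.iSup (fun i => .subgraphOfAdj _) (by simpa using hd)
  have hedges : M.edgeSet = Set.range fun i => s(f i, g i) := by
    simp [M, Set.iUnion_singleton_eq_range]
  have hinj : Function.Injective fun i => s(f i, g i) := by
    intro i j hij
    by_contra hne
    have hfi : f i ∈ s(f j, g j) := by
      rw [← show s(f i, g i) = s(f j, g j) from hij]
      exact Sym2.mem_mk_left _ _
    exact Set.disjoint_left.mp (hd hne) (Set.mem_insert _ _) (by simpa [Sym2.mem_iff] using hfi)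
  simpa [hedges, Set.ncard_range_of_injective hinj] using hM.ncard_edgeSet_le_matchingNumber

end SimpleGraph

theorem stmt_4_general {V : Type*} [Fintype V] (G : SimpleGraph V)
    (s : ℕ) (hm : matchingNumber G = s)
    {v : V} (c : G.Walk v v) (hc : c.IsCycle)
    (hlong : ∀ (w : V) (d : G.Walk w w), d.IsCycle → d.length ≤ c.length)
    (x₀ : V) (hx₀ : x₀ ∉ c.support)
    (u : Fin s → V) (huinj : Function.Injective u)
    (humem : ∀ i, u i ∈ c.support)
    (P : ∀ i : Fin s, G.Walk x₀ (u i)) (hP : ∀ i, (P i).IsPath)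
    (hdisj : ∀ i j, i ≠ j → ∀ w, w ∈ (P i).support → w ∈ (P j).support → w = x₀)
    (honC : ∀ i, ∀ w ∈ (P i).support, w ∈ c.support → w = u i) :
    ∀ a b : V, a ∉ c.support → a ≠ x₀ → b ∉ c.support → b ≠ x₀ → ¬ G.Adj a b := by
  classical
  intro a b ha _ hb _ hab
  choose σ hσ using fun i => exists_isCycleSucc hc.not_nil (humem i)
  have hσu (i j) : σ i ≠ u j := by
    intro h
    obtain rfl | hij := eq_or_ne i j
    · exact (hσ i).adj.ne h.symm
    · exact hc.notMem_edges_of_forall_length_le hlong hx₀ (hP i) (hP j) (hdisj i j hij)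
        (honC i) (honC j) (h ▸ (hσ i).mem_edges)
  have hon (i) : u i ∈ c.support ∧ σ i ∈ c.support := ⟨humem i, (hσ i).mem_support_right⟩
  have hσinj : Function.Injective σ := fun i j h =>
    huinj (hc.isCycleSucc_left_unique (hσ i) (h ▸ hσ j))
  have hpairs := card_le_matchingNumber_of_pairwise_disjoint (G := G)
    (Option.elim · a u) (Option.elim · b σ) (by rintro (_ | i); exacts [hab, (hσ i).adj]) (by
      rintro (_ | i) (_ | j) hij <;>
        simp only [Option.elim, ne_eq, Option.some.injEq, Set.disjoint_insert_right,
          Set.disjoint_singleton_right, Set.mem_insert_iff, Set.mem_singleton_iff] at hij ⊢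
      all_goals grind [Function.Injective])
  simp [hm] at hpairs

/-- The vertex set `V(G) \ (V(C) ∪ {x₀})` is an independent set in `G`. -/
theorem stmt_4 {V : Type*} [Fintype V] [DecidableEq V] (G : SimpleGraph V)
    (hnotham : ¬ G.IsHamiltonian)
    (s : ℕ) (hs : 2 ≤ s)
    (hκ : vertexConnectivity G = s) (hm : matchingNumber G = s)
    {v : V} (c : G.Walk v v) (hc : c.IsCycle)
    (hlong : ∀ (w : V) (d : G.Walk w w), d.IsCycle → d.length ≤ c.length)
    (x₀ : V) (hx₀ : x₀ ∉ c.support)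
    (u : Fin s → V) (huinj : Function.Injective u)
    (humem : ∀ i, u i ∈ c.support)
    (P : ∀ i : Fin s, G.Walk x₀ (u i)) (hP : ∀ i, (P i).IsPath)
    (hdisj : ∀ i j, i ≠ j → ∀ w, w ∈ (P i).support → w ∈ (P j).support → w = x₀)
    (honC : ∀ i, ∀ w ∈ (P i).support, w ∈ c.support → w = u i) :
    ∀ a b : V, a ∉ c.support → a ≠ x₀ → b ∉ c.support → b ≠ x₀ → ¬ G.Adj a b :=
  stmt_4_general G s hm c hc hlong x₀ hx₀ u huinj humem P hP hdisj honC
end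

section
/- Let G be a non-Hamiltonian graph with κ(G) = m(G) = s ≥ 2, longest cycle C = u₁u₁⁺u₂u₂⁺⋯uₛuₛ⁺u₁, and x₀ ∉ V(C) adjacent (via disjoint paths) to u₁,...,uₛ. Then every vertex x ∈ V(G) \ (V(C) ∪ {x₀}) satisfies N_C(x) = {u₁, u₂, ..., uₛ}. -/
/-!
Since `ν(G) = s`, the perfect matching `{uᵢ uᵢ⁺}` of `C` is a maximum matching, so no edge joins
two vertices off `C`. An edge `x uₚ⁺` is impossible too: together with `x₀ uₚ₊₁` and the edges
`uᵢ⁺ uᵢ₊₁` for `i ≠ p` it would form a matching of size `s + 1`. Hence `N(x) ⊆ {u₁, …, uₛ}`.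
Conversely `N(x)` separates `x` from its non-neighbour `x₀`, so `|N(x)| ≥ κ(G) = s`.
-/

open SimpleGraph Finset

open Function Set

section

variable {V : Type*} {G : SimpleGraph V}

lemma ncard_edgeSet_le_matchingNumber [Fintype V] {M : G.Subgraph} (hM : M.IsMatching) :
    M.edgeSet.ncard ≤ matchingNumber G := by
  refine le_csSup ⟨Nat.card (Sym2 V), ?_⟩ ⟨M, hM, rfl⟩
  rintro n ⟨M', -, rfl⟩
  simpa [Set.ncard_univ] using Set.ncard_le_ncard (Set.subset_univ M'.edgeSet)

lemma natCard_le_matchingNumber [Fintype V] {ι : Type*} {f g : ι → V} (hf : Injective f)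
    (hg : Injective g) (hfg : ∀ i j, f i ≠ g j) (hadj : ∀ i, G.Adj (f i) (g i)) :
    Nat.card ι ≤ matchingNumber G := by
  have hM : (⨆ i, G.subgraphOfAdj (hadj i)).IsMatching := by
    refine Subgraph.IsMatching.iSup (fun i => .subgraphOfAdj _) fun i j hij => ?_
    simp only [support_subgraphOfAdj, Set.disjoint_insert_left, Set.disjoint_insert_right,
      Set.disjoint_singleton, Set.mem_insert_iff, Set.mem_singleton_iff, not_or]
    exact ⟨⟨hf.ne hij.symm, hfg j i⟩, hfg i j, hg.ne hij⟩
  have hinj : Injective fun i => s(f i, g i) := by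
    intro i j hij
    rcases Sym2.eq_iff.mp hij with ⟨h, -⟩ | ⟨h, -⟩
    exacts [hf h, absurd h (hfg i j)]
  calc Nat.card ι = (range fun i => s(f i, g i)).ncard := (ncard_range_of_injective hinj).symm
    _ = (⨆ i, G.subgraphOfAdj (hadj i)).edgeSet.ncard := by
      rw [Subgraph.edgeSet_iSup]
      simp only [edgeSet_subgraphOfAdj, range_eq_iUnion]
    _ ≤ matchingNumber G := ncard_edgeSet_le_matchingNumber hM

lemma natCard_add_one_le_matchingNumber [Fintype V] {ι : Type*} [Finite ι] {f g : ι → V}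
    (hf : Injective f) (hg : Injective g) (hfg : ∀ i j, f i ≠ g j)
    (hadj : ∀ i, G.Adj (f i) (g i)) {a b : V} (hab : G.Adj a b)
    (ha : a ∉ range f ∪ range g) (hb : b ∉ range f ∪ range g) :
    Nat.card ι + 1 ≤ matchingNumber G := by
  simp only [mem_union, Set.mem_range, not_or, not_exists] at ha hb
  rw [← Finite.card_option]
  refine natCard_le_matchingNumber (f := fun o => o.elim a f) (g := fun o => o.elim b g)
    (Option.injective_iff.mpr ⟨hf, ?_⟩) (Option.injective_iff.mpr ⟨hg, ?_⟩) ?_ ?_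
  · simpa [eq_comm] using ha.1
  · simpa [eq_comm] using hb.2
  · rintro (_ | i) (_ | j)
    exacts [hab.ne, Ne.symm (ha.2 j), hb.1 i, hfg i j]
  · rintro (_ | i)
    exacts [hab, hadj i]

lemma Function.Injective.update_of_notMem_range {α β : Type*} [DecidableEq α] {f : α → β}
    (hf : Injective f) (a : α) {b : β} (hb : b ∉ range f) : Injective (update f a b) := by
  intro i j h
  simp only [update_apply] at h
  split_ifs at h with hi hj hj
  exacts [hi.trans hj.symm, absurd ⟨j, h.symm⟩ hb, absurd ⟨i, h⟩ hb, hf h]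

lemma vertexConnectivity_le_degree [Fintype V] [DecidableRel G.Adj] {x y : V} (hxy : x ≠ y)
    (hnadj : ¬ G.Adj x y) : vertexConnectivity G ≤ G.degree x := by
  refine Nat.sInf_le ⟨G.neighborFinset x, G.card_neighborFinset_eq_degree x, Or.inl ?_⟩
  intro hconn
  obtain ⟨p⟩ := hconn.preconnected ⟨x, by simp⟩ ⟨y, by simpa using hnadj⟩
  have hp : ¬ p.Nil := fun h => hxy (congrArg Subtype.val h.eq)
  exact p.snd.2 (by simpa using p.adj_snd hp)

end

/-- The cycle `u 0, u' 0, u 1, u' 1, …, u (s-1), u' (s-1)` of `G`. -/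
structure IsInterleavedCycle {V : Type*} (G : SimpleGraph V) {s : ℕ} (u u' : Fin s → V) :
    Prop where
  injective_left : Injective u
  injective_right : Injective u'
  left_ne_right : ∀ i j, u i ≠ u' j
  adj_left_right : ∀ i, G.Adj (u i) (u' i)
  adj_right_left : ∀ i, G.Adj (u' i) (u (finRotate s i))

lemma SimpleGraph.Walk.IsCycle.isInterleavedCycle {V : Type*} {G : SimpleGraph V} {v : V}
    {c : G.Walk v v} (hc : c.IsCycle) {s : ℕ} (hlen : c.length = 2 * s) {u u' : Fin s → V}
    (hu : ∀ i : Fin s, c.getVert (2 * i) = u i) (hu' : ∀ i : Fin s, c.getVert (2 * i + 1) = u' i) :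
    IsInterleavedCycle G u u' := by
  have hinj : ∀ {k l : ℕ}, k < 2 * s → l < 2 * s → c.getVert k = c.getVert l → k = l :=
    fun hk hl h => hc.getVert_injOn' (by simp only [Set.mem_ofPred_eq]; omega)
      (by simp only [Set.mem_ofPred_eq]; omega) h
  refine ⟨fun i j h => ?_, fun i j h => ?_, fun i j h => ?_, fun i => ?_, fun i => ?_⟩
  · rw [← hu, ← hu] at h
    exact Fin.ext (by have := hinj (by omega) (by omega) h; omega)
  · rw [← hu', ← hu'] at h
    exact Fin.ext (by have := hinj (by omega) (by omega) h; omega)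
  · rw [← hu, ← hu'] at h
    have := hinj (by omega) (by omega) h; omega
  · rw [← hu, ← hu']
    exact c.adj_getVert_succ (by omega)
  · rw [← hu', ← hu]
    convert c.adj_getVert_succ (i := 2 * i + 1) (by omega) using 1
    obtain ⟨t, rfl⟩ : ∃ t, s = t + 1 := ⟨s - 1, by have := i.pos; omega⟩
    rw [coe_finRotate]
    split_ifs with h
    · rw [h, Fin.val_last, mul_zero, c.getVert_zero, show 2 * t + 1 + 1 = c.length by omega,
        c.getVert_length]
    · rfl

namespace IsInterleavedCycle

variable {V : Type*} [Fintype V] {G : SimpleGraph V} {s : ℕ} {u u' : Fin s → V}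

lemma not_adj_of_notMem (hC : IsInterleavedCycle G u u') (hν : matchingNumber G ≤ s) {a b : V}
    (ha : a ∉ range u ∪ range u') (hb : b ∉ range u ∪ range u') : ¬ G.Adj a b := fun hab => by
  have := natCard_add_one_le_matchingNumber hC.injective_left hC.injective_right
    hC.left_ne_right hC.adj_left_right hab ha hb
  simp only [Nat.card_eq_fintype_card, Fintype.card_fin] at this
  omega

lemma not_adj_right (hC : IsInterleavedCycle G u u') (hν : matchingNumber G ≤ s) {x x₀ : V}
    (hx : x ∉ range u ∪ range u') (hx₀ : x₀ ∉ range u ∪ range u') (hne : x ≠ x₀) {p : Fin s}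
    (hp : G.Adj x₀ (u (finRotate s p))) : ¬ G.Adj x (u' p) := fun hxp => by
  have hf := hC.injective_right.update_of_notMem_range p fun h => hx₀ (Or.inr h)
  simp only [mem_union, Set.mem_range, not_or, not_exists] at hx hx₀
  have := natCard_add_one_le_matchingNumber hf (hC.injective_left.comp (finRotate s).injective)
    ?_ ?_ hxp ?_ ?_
  · simp only [Nat.card_eq_fintype_card, Fintype.card_fin] at this
    omega
  · intro i j
    rw [update_apply]
    split_ifs
    exacts [Ne.symm (hx₀.1 _), (hC.left_ne_right _ _).symm]
  · intro i
    rw [update_apply]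
    split_ifs with hi
    exacts [hi ▸ hp, hC.adj_right_left i]
  · simp only [mem_union, Set.mem_range, not_or, not_exists, comp_apply, update_apply]
    refine ⟨fun i => ?_, fun i => hx.1 _⟩
    split_ifs
    exacts [hne.symm, hx.2 i]
  · simp only [mem_union, Set.mem_range, not_or, not_exists, comp_apply, update_apply]
    refine ⟨fun i => ?_, fun i => hC.left_ne_right _ p⟩
    split_ifs with hi
    exacts [hx₀.2 p ∘ Eq.symm, hC.injective_right.ne hi]

lemma mem_range_of_adj (hC : IsInterleavedCycle G u u') (hν : matchingNumber G ≤ s) {x x₀ : V}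
    (hx : x ∉ range u ∪ range u') (hx₀ : x₀ ∉ range u ∪ range u') (hne : x ≠ x₀)
    (h₀ : ∀ i, G.Adj x₀ (u i)) {y : V} (hy : G.Adj x y) : y ∈ range u := by
  by_contra hyu
  by_cases hyu' : y ∈ range u'
  · obtain ⟨p, rfl⟩ := hyu'
    exact hC.not_adj_right hν hx hx₀ hne (h₀ _) hy
  · exact hC.not_adj_of_notMem hν hx (not_or.mpr ⟨hyu, hyu'⟩) hy

lemma neighborSet_eq_range (hC : IsInterleavedCycle G u u') (hν : matchingNumber G ≤ s)
    (hκ : s ≤ vertexConnectivity G) {x x₀ : V} (hx : x ∉ range u ∪ range u')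
    (hx₀ : x₀ ∉ range u ∪ range u') (hne : x ≠ x₀) (h₀ : ∀ i, G.Adj x₀ (u i)) :
    G.neighborSet x = range u := by
  classical
  refine Set.eq_of_subset_of_ncard_le (fun y hy => hC.mem_range_of_adj hν hx hx₀ hne h₀ hy) ?_
  calc (range u).ncard = s := by simp [ncard_range_of_injective hC.injective_left]
    _ ≤ G.degree x := hκ.trans (vertexConnectivity_le_degree hne (hC.not_adj_of_notMem hν hx hx₀))
    _ = (G.neighborSet x).ncard := by
      rw [← card_neighborSet_eq_degree, Set.ncard_eq_toFinset_card', Set.toFinset_card]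

end IsInterleavedCycle

theorem stmt_5_general {V : Type*} [Fintype V] (G : SimpleGraph V)
    (s : ℕ)
    (hκ : vertexConnectivity G = s) (hm : matchingNumber G = s)
    {v : V} (c : G.Walk v v) (hc : c.IsCycle)
    (hlen : c.length = 2 * s)
    (u usucc : Fin s → V)
    (hu : ∀ i : Fin s, c.getVert (2 * ↑i) = u i)
    (husucc : ∀ i : Fin s, c.getVert (2 * ↑i + 1) = usucc i)
    (x₀ : V) (hx₀ : x₀ ∉ c.support)
    (hadj : ∀ i, G.Adj x₀ (u i)) :
    ∀ x : V, x ∉ c.support → x ≠ x₀ →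
      ∀ w ∈ c.support, (G.Adj x w ↔ ∃ i : Fin s, w = u i) := by
  intro x hx hne w _
  have hC := hc.isInterleavedCycle hlen hu husucc
  have hoff : ∀ y ∉ c.support, y ∉ range u ∪ range usucc := by
    rintro y hy (⟨i, rfl⟩ | ⟨i, rfl⟩)
    exacts [hy (hu i ▸ c.getVert_mem_support _), hy (husucc i ▸ c.getVert_mem_support _)]
  rw [← mem_neighborSet, hC.neighborSet_eq_range hm.le hκ.ge (hoff x hx) (hoff x₀ hx₀) hne hadj]
  simp [eq_comm]

/-- Every vertex `x ∈ V(G) \ (V(C) ∪ {x₀})` satisfies `N_C(x) = {u₁, …, uₛ}`. -/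
theorem stmt_5 {V : Type*} [Fintype V] [DecidableEq V] (G : SimpleGraph V)
    (hnotham : ¬ G.IsHamiltonian)
    (s : ℕ) (hs : 2 ≤ s)
    (hκ : vertexConnectivity G = s) (hm : matchingNumber G = s)
    {v : V} (c : G.Walk v v) (hc : c.IsCycle)
    (hlong : ∀ (w : V) (d : G.Walk w w), d.IsCycle → d.length ≤ c.length)
    (hlen : c.length = 2 * s)
    (u usucc : Fin s → V)
    (hu : ∀ i : Fin s, c.getVert (2 * ↑i) = u i)
    (husucc : ∀ i : Fin s, c.getVert (2 * ↑i + 1) = usucc i)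
    (x₀ : V) (hx₀ : x₀ ∉ c.support)
    (hadj : ∀ i, G.Adj x₀ (u i)) :
    ∀ x : V, x ∉ c.support → x ≠ x₀ →
      ∀ w ∈ c.support, (G.Adj x w ↔ ∃ i : Fin s, w = u i) :=
  stmt_5_general G s hκ hm c hc hlen u usucc hu husucc x₀ hx₀ hadj
end

section
/- If G is a graph on n ≥ 3 vertices with matching number m(G) ≤ κ(G) and κ(G) ≥ 2, and additionally G contains no complete bipartite subgraph K_{p,p+1} with p ≥ 2 for any p ≤ κ(G), then G is Hamiltonian. -/
open SimpleGraph Finset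

/-!
Take a longest cycle `c` and suppose some vertex `v` lies off it. Let `H` be the component of
`G - c` containing `v` and `T` the set of vertices of `c` with a neighbour in `H`. Since `T`
separates `H` from the rest of `c`, `κ(G) ≤ |T|`. Maximality of `c` forbids a detour through `H`:
the successor on `c` of a vertex of `T` has no neighbour in `H`, and the successors of two distinct
vertices of `T` are not adjacent. So `v` together with the successors of `κ(G)` vertices of `T`
form an independent set `A` of size `κ(G) + 1`. By Hall's theorem either `A` is matched into its
neighbourhood, contradicting `m(G) ≤ κ(G)`, or some `S ⊆ A` has `|N(S)| < |S|`; as every degree is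
at least `κ(G)`, this forces `|N(S)| = κ(G)`, `|S| = κ(G) + 1` and `N(s) = N(S)` for all `s ∈ S`,
a forbidden `K_{κ,κ+1}`.
-/

namespace SimpleGraph

variable {V : Type*} {G : SimpleGraph V}

section Finite

variable [Fintype V]

lemma vertexConnectivity_le_card_of_separates (S : Finset V) {H : Set V}
    (hH : ∀ x ∈ H, ∀ y, G.Adj x y → y ∉ S → y ∈ H) {a b : V}
    (ha : a ∈ H) (haS : a ∉ S) (hb : b ∉ H) (hbS : b ∉ S) :
    vertexConnectivity G ≤ #S := by
  refine Nat.sInf_le ⟨S, rfl, Or.inl fun hconn => ?_⟩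
  obtain ⟨p⟩ := hconn.preconnected ⟨a, haS⟩ ⟨b, hbS⟩
  obtain ⟨d, -, hd₁, hd₂⟩ := p.exists_boundary_dart {z | z.1 ∈ H} ha hb
  exact hd₂ (hH _ hd₁ _ d.adj d.snd.2)

lemma connected_of_vertexConnectivity_pos [Nonempty V] (h : 0 < vertexConnectivity G) :
    G.Connected := by
  refine ⟨fun a b => ?_⟩
  by_contra hab
  have := vertexConnectivity_le_card_of_separates (G := G) ∅ (H := {z | G.Reachable a z})
    (fun x hx y hxy _ => hx.trans hxy.reachable) (Reachable.refl a) (Finset.notMem_empty a)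
    hab (Finset.notMem_empty b)
  rw [Finset.card_empty] at this
  omega

lemma vertexConnectivity_le_degree [DecidableRel G.Adj] (x : V) :
    vertexConnectivity G ≤ G.degree x := by
  classical
  rw [← card_neighborFinset_eq_degree]
  by_cases hy : ∃ y, y ≠ x ∧ ¬ G.Adj x y
  · obtain ⟨y, hyx, hxy⟩ := hy
    exact vertexConnectivity_le_card_of_separates _ (H := {x})
      (fun z hz z' hzz' hz' => absurd (hz ▸ hzz') (by simpa using hz')) rfl (by simp)
      hyx (by simpa using hxy)
  · push Not at hy
    refine Nat.sInf_le ⟨_, rfl, Or.inr ?_⟩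
    calc Fintype.card V = #(insert x (G.neighborFinset x)) := by
          rw [← Finset.card_univ]
          congr 1
          ext y
          by_cases hyx : y = x <;> simp [hyx, hy y]
      _ ≤ _ := Finset.card_insert_le _ _

lemma le_matchingNumber {M : G.Subgraph} (hM : M.IsMatching) :
    M.edgeSet.ncard ≤ matchingNumber G := by
  refine le_csSup ⟨Fintype.card (Sym2 V), ?_⟩ ⟨M, hM, rfl⟩
  rintro n ⟨N, -, rfl⟩
  exact (Set.ncard_le_ncard (Set.subset_univ _)).trans_eq (by simp)

lemma card_le_matchingNumber_of_injective (A : Finset V) (f : A → V)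
    (hf : Function.Injective f) (hadj : ∀ a : A, G.Adj a (f a)) (hout : ∀ a, f a ∉ A) :
    #A ≤ matchingNumber G := by
  have hdisj : Pairwise fun a b : A =>
      Disjoint (G.subgraphOfAdj (hadj a)).support (G.subgraphOfAdj (hadj b)).support := by
    intro a b hab
    have := hout a
    have := hout b
    have : f a ≠ f b := hf.ne hab
    have : (a : V) ≠ b := Subtype.coe_injective.ne hab
    simp only [support_subgraphOfAdj, Set.disjoint_insert_left, Set.disjoint_insert_right,
      Set.mem_insert_iff, Set.mem_singleton_iff, Set.disjoint_singleton]
    grind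
  have hinj : Function.Injective fun a : A => s((a : V), f a) := by
    intro a b hab
    rcases Sym2.eq_iff.mp hab with ⟨h, -⟩ | ⟨h, -⟩
    · exact Subtype.ext h
    · exact absurd (h ▸ a.2) (hout b)
  calc #A = (Set.range fun a : A => s((a : V), f a)).ncard := by
        rw [Set.ncard_range_of_injective hinj, Nat.card_eq_fintype_card, Fintype.card_coe]
    _ = (⨆ a, G.subgraphOfAdj (hadj a)).edgeSet.ncard := by
        simp [Subgraph.edgeSet_iSup, edgeSet_subgraphOfAdj, Set.iUnion_singleton_eq_range]
    _ ≤ matchingNumber G := le_matchingNumber (.iSup (fun a => .subgraphOfAdj _) hdisj)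

variable [DecidableEq V] [DecidableRel G.Adj]

lemma exists_completeBipartite_of_card_biUnion_neighborFinset_lt {k : ℕ}
    (hdeg : ∀ v, k ≤ G.degree v) {Y : Finset V} (hY : G.IsIndepSet Y) (hYk : #Y ≤ k + 1)
    (hlt : #(Y.biUnion fun y => G.neighborFinset y) < #Y) :
    ∃ X : Finset V, Disjoint X Y ∧ #X = k ∧ #Y = k + 1 ∧ ∀ x ∈ X, ∀ y ∈ Y, G.Adj x y := by
  set X := Y.biUnion fun y => G.neighborFinset y
  obtain ⟨y₀, hy₀⟩ := Finset.card_pos.mp (by omega : 0 < #Y)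
  have hsub : ∀ y ∈ Y, G.neighborFinset y ⊆ X := fun y hy =>
    Finset.subset_biUnion_of_mem (fun y => G.neighborFinset y) hy
  have hkX : k ≤ #X := by
    calc k ≤ G.degree y₀ := hdeg y₀
      _ = #(G.neighborFinset y₀) := (card_neighborFinset_eq_degree G y₀).symm
      _ ≤ #X := Finset.card_le_card (hsub y₀ hy₀)
  have hX : #X = k := by omega
  have hnbr : ∀ y ∈ Y, G.neighborFinset y = X := fun y hy =>
    Finset.eq_of_subset_of_card_le (hsub y hy) (by rw [card_neighborFinset_eq_degree]; grind)
  refine ⟨X, Finset.disjoint_left.mpr fun x hx hxY => ?_, hX, by omega, fun x hx y hy => ?_⟩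
  · obtain ⟨y, hy, hyx⟩ := Finset.mem_biUnion.mp hx
    rw [mem_neighborFinset] at hyx
    exact hY hy hxY hyx.ne hyx
  · rw [← hnbr y hy, mem_neighborFinset] at hx
    exact hx.symm

lemma exists_completeBipartite_of_isIndepSet {k : ℕ} (hdeg : ∀ v, k ≤ G.degree v)
    {A : Finset V} (hA : G.IsIndepSet A) (hAk : #A = k + 1) (hm : matchingNumber G < #A) :
    ∃ X Y : Finset V, Disjoint X Y ∧ #X = k ∧ #Y = k + 1 ∧ ∀ x ∈ X, ∀ y ∈ Y, G.Adj x y := by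
  by_cases hHall : ∀ s : Finset A, #s ≤ #(s.biUnion fun a => G.neighborFinset a)
  · obtain ⟨f, hf, hfA⟩ := (Finset.all_card_le_biUnion_card_iff_existsInjective' _).mp hHall
    have hadj : ∀ a : A, G.Adj a (f a) := fun a => (mem_neighborFinset _ _ _).mp (hfA a)
    have := card_le_matchingNumber_of_injective A f hf hadj fun a ha =>
      hA a.2 ha (hadj a).ne (hadj a)
    omega
  · push Not at hHall
    obtain ⟨s, hs⟩ := hHall
    set Y := s.image Subtype.val
    have hYA : Y ⊆ A := fun y hy => by
      obtain ⟨a, -, rfl⟩ := Finset.mem_image.mp hy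
      exact a.2
    have hYk : #Y ≤ k + 1 := hAk ▸ Finset.card_le_card hYA
    have hlt : #(Y.biUnion fun y => G.neighborFinset y) < #Y := by
      rwa [Finset.image_biUnion, Finset.card_image_of_injective _ Subtype.val_injective]
    obtain ⟨X, hX⟩ := exists_completeBipartite_of_card_biUnion_neighborFinset_lt hdeg
      (Set.Pairwise.mono (Finset.coe_subset.mpr hYA) hA) hYk hlt
    exact ⟨X, Y, hX⟩

end Finite

lemma exists_component_induce {s : Set V} {v : V} (hv : v ∈ s) :
    ∃ H ⊆ s, v ∈ H ∧ (∀ x ∈ H, ∀ y ∈ s, G.Adj x y → y ∈ H) ∧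
      ∀ a ∈ H, ∀ b ∈ H, ∃ r : G.Walk a b, r.IsPath ∧ ∀ y ∈ r.support, y ∈ s := by
  classical
  refine ⟨{x | ∃ hx : x ∈ s, (G.induce s).Reachable ⟨x, hx⟩ ⟨v, hv⟩}, fun x hx => hx.1,
    ⟨hv, .refl _⟩, fun x ⟨hx, hxv⟩ y hy hxy =>
      ⟨hy, (show (G.induce s).Adj ⟨y, hy⟩ ⟨x, hx⟩ from hxy.symm).reachable.trans hxv⟩, ?_⟩
  rintro a ⟨ha, hav⟩ b ⟨hb, hbv⟩
  obtain ⟨p⟩ := hav.trans hbv.symm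
  refine ⟨(p.toPath.1.map (Embedding.induce s).toHom : G.Walk a b),
    p.toPath.2.map (f := (Embedding.induce s).toHom) Subtype.val_injective, fun y hy => ?_⟩
  obtain ⟨z, -, rfl⟩ := List.mem_map.mp ((Walk.support_map _ _).symm ▸ hy :)
  exact z.2

lemma exists_isCycle_forall_length_le [Fintype V] (h : ∃ u, ∃ c : G.Walk u u, c.IsCycle) :
    ∃ u, ∃ c : G.Walk u u, c.IsCycle ∧
      ∀ u', ∀ c' : G.Walk u' u', c'.IsCycle → c'.length ≤ c.length := by
  set lengths := {n | ∃ u, ∃ c : G.Walk u u, c.IsCycle ∧ c.length = n}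
  have hbdd : BddAbove lengths := by
    refine ⟨Fintype.card V, ?_⟩
    rintro _ ⟨u, c, hc, rfl⟩
    rw [← Walk.length_tail_add_one hc.not_nil]
    exact hc.isPath_tail.length_lt
  obtain ⟨u, c, hc⟩ := h
  obtain ⟨u, c, hc, hlen⟩ := Nat.sSup_mem (⟨c.length, u, c, hc, rfl⟩ : lengths.Nonempty) hbdd
  exact ⟨u, c, hc, fun u' c' hc' => hlen ▸ le_csSup hbdd ⟨u', c', hc', rfl⟩⟩

lemma Connected.exists_isCycle_of_two_le_degree [Fintype V] [Nontrivial V] [DecidableRel G.Adj]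
    (hconn : G.Connected) (hdeg : ∀ v, 2 ≤ G.degree v) : ∃ u, ∃ c : G.Walk u u, c.IsCycle := by
  by_contra! h
  have := IsTree.minDegree_eq_one_of_nontrivial ⟨hconn, h⟩
  have := G.le_minDegree_of_forall_le_degree 2 hdeg
  omega

namespace Walk

variable {w : V} {c : G.Walk w w}

lemma IsCycle.dart_eq_of_fst_eq (hc : c.IsCycle) {d d' : G.Dart} (hd : d ∈ c.darts)
    (hd' : d' ∈ c.darts) (h : d.fst = d'.fst) : d = d' :=
  List.inj_on_of_nodup_map (c.map_fst_darts ▸ hc.nodup_dropLast_support) hd hd' h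

lemma IsCycle.dart_eq_of_snd_eq (hc : c.IsCycle) {d d' : G.Dart} (hd : d ∈ c.darts)
    (hd' : d' ∈ c.darts) (h : d.snd = d'.snd) : d = d' :=
  List.inj_on_of_nodup_map (c.map_snd_darts ▸ hc.support_nodup) hd hd' h

lemma mem_support_tail_iff_of_not_nil (hc : ¬c.Nil) {y : V} :
    y ∈ c.support.tail ↔ y ∈ c.support := by
  rw [mem_support_iff]
  exact ⟨Or.inr, fun h => h.elim (· ▸ end_mem_tail_support hc) id⟩

lemma isCycle_cons_concat_append {t a b x : V} (hta : G.Adj t a) {r : G.Walk a b}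
    (hbx : G.Adj b x) {q : G.Walk x t} (hr : r.IsPath) (hq : q.IsPath)
    (hrq : ∀ y ∈ r.support, y ∉ q.support) (htx : t ≠ x) :
    ((cons hta (r.concat hbx)).append q).IsCycle := by
  have hxq : x ∉ q.support.tail := by
    have := hq.support_nodup
    rw [← q.cons_tail_support, List.nodup_cons] at this
    exact this.1
  refine IsPath.isCycle_append ?_ hq ?_ (Or.inl (by simp))
  · refine (hr.concat (fun hx => hrq x hx q.start_mem_support) hbx).cons ?_
    rw [support_concat, List.mem_append, List.mem_singleton]
    exact fun h => h.elim (fun ht => hrq t ht q.end_mem_support) htx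
  · rw [support_cons, List.tail_cons, support_concat]
    intro y hy hyq
    rcases List.mem_append.mp hy with hy | hy
    · exact hrq y hy (List.mem_of_mem_tail hyq)
    · exact hxq (List.mem_singleton.mp hy ▸ hyq)

variable [DecidableEq V]

/-- The vertex following `u` on the closed walk `c`; junk value `u` when `u` is not on `c`. -/
def cycleSucc (c : G.Walk w w) (u : V) : V :=
  if hu : u ∈ c.support then (c.rotate u hu).snd else u

lemma cycleSucc_of_mem {u : V} (hu : u ∈ c.support) : c.cycleSucc u = (c.rotate u hu).snd :=
  dif_pos hu

lemma exists_dart_cycleSucc (hc : ¬c.Nil) {u : V} (hu : u ∈ c.support) :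
    ∃ d ∈ c.darts, d.fst = u ∧ d.snd = c.cycleSucc u :=
  have hc' : ¬(c.rotate u hu).Nil := by rwa [nil_rotate]
  ⟨_, (c.rotate_darts u hu).mem_iff.mp (firstDart_mem_darts hc'), rfl,
    (cycleSucc_of_mem hu).symm⟩

lemma adj_cycleSucc (hc : ¬c.Nil) {u : V} (hu : u ∈ c.support) : G.Adj u (c.cycleSucc u) := by
  obtain ⟨d, -, rfl, hd⟩ := exists_dart_cycleSucc hc hu
  exact hd ▸ d.adj

lemma cycleSucc_mem_support {u : V} (hu : u ∈ c.support) : c.cycleSucc u ∈ c.support := by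
  rw [cycleSucc_of_mem hu, ← mem_support_rotate_iff c u hu]
  exact getVert_mem_support _ _

lemma IsCycle.cycleSucc_fst_eq_snd (hc : c.IsCycle) {d : G.Dart} (hd : d ∈ c.darts) :
    c.cycleSucc d.fst = d.snd := by
  obtain ⟨d', hd', hfst, hsnd⟩ :=
    exists_dart_cycleSucc hc.not_nil (c.dart_fst_mem_support_of_mem_darts hd)
  rw [← hsnd, hc.dart_eq_of_fst_eq hd' hd hfst]

lemma IsCycle.injOn_cycleSucc (hc : c.IsCycle) : Set.InjOn c.cycleSucc {u | u ∈ c.support} := by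
  intro u₁ hu₁ u₂ hu₂ h
  obtain ⟨d₁, hd₁, rfl, hs₁⟩ := exists_dart_cycleSucc hc.not_nil hu₁
  obtain ⟨d₂, hd₂, rfl, hs₂⟩ := exists_dart_cycleSucc hc.not_nil hu₂
  rw [hc.dart_eq_of_snd_eq hd₁ hd₂ (by rw [hs₁, hs₂, h])]

lemma IsCycle.exists_isPath_cycleSucc (hc : c.IsCycle) {u : V} (hu : u ∈ c.support) :
    ∃ q : G.Walk (c.cycleSucc u) u, q.IsPath ∧ q.length + 1 = c.length ∧
      (∀ y, y ∈ q.support ↔ y ∈ c.support) ∧ q.darts ⊆ c.darts := by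
  have hc' : ¬(c.rotate u hu).Nil := by rw [nil_rotate]; exact hc.not_nil
  rw [cycleSucc_of_mem hu]
  refine ⟨_, (hc.rotate hu).isPath_tail, by rw [length_tail_add_one hc', length_rotate],
    fun y => ?_, fun d hd => ?_⟩
  · rw [support_tail_of_not_nil _ hc', mem_support_tail_iff_of_not_nil hc', mem_support_rotate_iff]
  · rw [darts_tail] at hd
    exact (c.rotate_darts u hu).mem_iff.mp (List.mem_of_mem_tail hd)

lemma IsCycle.exists_isPath_of_adj_cycleSucc (hc : c.IsCycle) {u₁ u₂ : V}
    (hu₁ : u₁ ∈ c.support) (hu₂ : u₂ ∈ c.support) (hne : u₁ ≠ u₂)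
    (hadj : G.Adj (c.cycleSucc u₁) (c.cycleSucc u₂)) :
    ∃ q : G.Walk u₂ u₁, q.IsPath ∧ q.length + 1 = c.length ∧
      ∀ y, y ∈ q.support ↔ y ∈ c.support := by
  obtain ⟨P, hP, hPlen, hPc, hPd⟩ := hc.exists_isPath_cycleSucc hu₁
  have hu₂P : u₂ ∈ P.support := (hPc u₂).mpr hu₂
  set M := P.takeUntil u₂ hu₂P
  set E := P.dropUntil u₂ hu₂P
  have hE : ¬E.Nil := not_nil_of_ne hne.symm
  -- `E` starts with the dart of `c` leaving `u₂`, so it continues at the successor of `u₂`.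
  have hEsnd : E.snd = c.cycleSucc u₂ := by
    have hd : E.firstDart hE ∈ c.darts :=
      hPd (P.darts_dropUntil_subset_darts hu₂P (firstDart_mem_darts hE))
    exact (hc.cycleSucc_fst_eq_snd hd).symm
  -- Back along `c` from `u₂` to the successor of `u₁`, across to the successor of `u₂`, and
  -- forward along `c` to `u₁`.
  let q : G.Walk u₂ u₁ := M.reverse.append (cons hadj (E.tail.copy hEsnd rfl))
  have hsplit : M.append E = P := P.take_spec hu₂P
  have hperm : q.support.Perm P.support := by
    rw [← hsplit]
    simp only [q, support_append, support_reverse, support_cons, support_copy, List.tail_cons,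
      ← support_tail_of_not_nil _ hE]
    exact (List.reverse_perm _).append_right _
  refine ⟨q, ?_, ?_, fun y => (hperm.mem_iff).trans (hPc y)⟩
  · rw [isPath_def]
    exact hperm.nodup_iff.mpr hP.support_nodup
  · have := congrArg length hsplit
    rw [length_append] at this
    simp only [q, length_append, length_reverse, length_cons, length_copy]
    have := length_tail_add_one hE
    omega

lemma IsCycle.isHamiltonianCycle_of_forall_mem_support
    (hc : c.IsCycle) (h : ∀ v, v ∈ c.support) : c.IsHamiltonianCycle :=
  ⟨hc, hc.isPath_tail.isHamiltonian_of_mem fun v => by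
    rw [support_tail_of_not_nil _ hc.not_nil, mem_support_tail_iff_of_not_nil hc.not_nil]
    exact h v⟩

lemma IsCycle.not_adj_cycleSucc_of_isPath (hc : c.IsCycle)
    (hmax : ∀ u, ∀ c' : G.Walk u u, c'.IsCycle → c'.length ≤ c.length)
    {t a b : V} (ht : t ∈ c.support) (hta : G.Adj t a) {r : G.Walk a b} (hr : r.IsPath)
    (hrc : ∀ y ∈ r.support, y ∉ c.support) : ¬G.Adj b (c.cycleSucc t) := by
  intro hbx
  obtain ⟨q, hq, hqlen, hqc, -⟩ := hc.exists_isPath_cycleSucc ht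
  have := hmax _ _ <| isCycle_cons_concat_append hta hbx hr hq
    (fun y hy hyq => hrc y hy ((hqc y).mp hyq)) (adj_cycleSucc hc.not_nil ht).ne
  simp only [length_append, length_cons, length_concat] at this
  omega

lemma IsCycle.not_adj_cycleSucc_cycleSucc_of_isPath (hc : c.IsCycle)
    (hmax : ∀ u, ∀ c' : G.Walk u u, c'.IsCycle → c'.length ≤ c.length)
    {t₁ t₂ a b : V} (ht₁ : t₁ ∈ c.support) (ht₂ : t₂ ∈ c.support) (hne : t₁ ≠ t₂)
    (hta : G.Adj t₁ a) (hbt : G.Adj b t₂) {r : G.Walk a b} (hr : r.IsPath)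
    (hrc : ∀ y ∈ r.support, y ∉ c.support) : ¬G.Adj (c.cycleSucc t₁) (c.cycleSucc t₂) := by
  intro hadj
  obtain ⟨q, hq, hqlen, hqc⟩ := hc.exists_isPath_of_adj_cycleSucc ht₁ ht₂ hne hadj
  have := hmax _ _ <| isCycle_cons_concat_append hta hbt hr hq
    (fun y hy hyq => hrc y hy ((hqc y).mp hyq)) hne
  simp only [length_append, length_cons, length_concat] at this
  omega

lemma IsCycle.exists_isIndepSet_of_notMem_support [Fintype V] (hc : c.IsCycle)
    (hmax : ∀ u, ∀ c' : G.Walk u u, c'.IsCycle → c'.length ≤ c.length)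
    {v : V} (hv : v ∉ c.support) :
    ∃ A : Finset V, G.IsIndepSet A ∧ #A = vertexConnectivity G + 1 := by
  classical
  obtain ⟨H, hHs, hvH, hHclosed, hHpath⟩ :=
    exists_component_induce (G := G) (s := {y | y ∉ c.support}) hv
  set T := c.support.toFinset.filter fun t => ∃ h ∈ H, G.Adj t h
  have hTc : ∀ t ∈ T, t ∈ c.support := fun t ht =>
    List.mem_toFinset.mp (Finset.mem_filter.mp ht).1
  have hnotAdjH : ∀ t ∈ T, ∀ b ∈ H, ¬G.Adj b (c.cycleSucc t) := by
    intro t ht b hb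
    obtain ⟨a, ha, hta⟩ := (Finset.mem_filter.mp ht).2
    obtain ⟨r, hr, hrs⟩ := hHpath a ha b hb
    exact hc.not_adj_cycleSucc_of_isPath hmax (hTc t ht) hta hr hrs
  have hnotAdjSucc : ∀ t₁ ∈ T, ∀ t₂ ∈ T, t₁ ≠ t₂ → ¬G.Adj (c.cycleSucc t₁) (c.cycleSucc t₂) := by
    intro t₁ ht₁ t₂ ht₂ hne
    obtain ⟨a, ha, hta⟩ := (Finset.mem_filter.mp ht₁).2
    obtain ⟨b, hb, htb⟩ := (Finset.mem_filter.mp ht₂).2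
    obtain ⟨r, hr, hrs⟩ := hHpath a ha b hb
    exact hc.not_adj_cycleSucc_cycleSucc_of_isPath hmax (hTc t₁ ht₁) (hTc t₂ ht₂) hne hta
      htb.symm hr hrs
  obtain ⟨y, hyc, hyT⟩ : ∃ y ∈ c.support, y ∉ T := by
    by_contra! hall
    obtain ⟨b, hb, hxb⟩ :=
      (Finset.mem_filter.mp (hall _ (cycleSucc_mem_support c.start_mem_support))).2
    exact hnotAdjH w (hall w c.start_mem_support) b hb hxb.symm
  have hκ : vertexConnectivity G ≤ #T := by
    refine vertexConnectivity_le_card_of_separates T (H := H) (fun x hx z hxz hzT => ?_) hvH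
      (fun h => hv (hTc v h)) (fun h => hHs h hyc) hyT
    by_cases hzc : z ∈ c.support
    · exact absurd (Finset.mem_filter.mpr ⟨List.mem_toFinset.mpr hzc, x, hx, hxz.symm⟩) hzT
    · exact hHclosed x hx z hzc hxz
  obtain ⟨T', hT'T, hT'card⟩ := Finset.exists_subset_card_eq hκ
  have hinj : Set.InjOn c.cycleSucc T' := hc.injOn_cycleSucc.mono fun t ht => hTc t (hT'T ht)
  refine ⟨insert v (T'.image c.cycleSucc), ?_, ?_⟩
  · rw [Finset.coe_insert, Finset.coe_image]
    refine Set.Pairwise.insert ?_ fun _ ⟨t, ht, hx⟩ _ =>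
      hx ▸ ⟨hnotAdjH t (hT'T ht) v hvH, fun h => hnotAdjH t (hT'T ht) v hvH h.symm⟩
    rintro _ ⟨t₁, ht₁, rfl⟩ _ ⟨t₂, ht₂, rfl⟩ hne
    exact hnotAdjSucc t₁ (hT'T ht₁) t₂ (hT'T ht₂) fun h => hne (h ▸ rfl)
  · rw [Finset.card_insert_of_notMem, Finset.card_image_of_injOn hinj, hT'card]
    intro hv'
    obtain ⟨t, ht, rfl⟩ := Finset.mem_image.mp hv'
    exact hv (cycleSucc_mem_support (hTc t (hT'T ht)))

end Walk

end SimpleGraph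

/-- If `G` has `n ≥ 3` vertices, `m(G) ≤ κ(G)`, `κ(G) ≥ 2`, and `G` contains no complete
bipartite subgraph `K_{p,p+1}` for any `2 ≤ p ≤ κ(G)`, then `G` is Hamiltonian. -/
theorem stmt_11 {V : Type*} [Fintype V] [DecidableEq V] (G : SimpleGraph V)
    (hn : 3 ≤ Fintype.card V)
    (hκ : 2 ≤ vertexConnectivity G)
    (hm : matchingNumber G ≤ vertexConnectivity G)
    (hforb : ∀ p : ℕ, 2 ≤ p → p ≤ vertexConnectivity G →
      ¬ ∃ A B : Finset V, Disjoint A B ∧ A.card = p ∧ B.card = p + 1 ∧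
          ∀ a ∈ A, ∀ b ∈ B, G.Adj a b) :
    G.IsHamiltonian := by
  classical
  have : Nontrivial V := Fintype.one_lt_card_iff_nontrivial.mp (by omega)
  have hdeg : ∀ x, vertexConnectivity G ≤ G.degree x := vertexConnectivity_le_degree
  obtain ⟨w, c, hc, hmax⟩ := exists_isCycle_forall_length_le <|
    (connected_of_vertexConnectivity_pos (by omega)).exists_isCycle_of_two_le_degree
      fun x => hκ.trans (hdeg x)
  refine fun _ => ⟨w, c, hc.isHamiltonianCycle_of_forall_mem_support fun v => ?_⟩
  by_contra hv
  obtain ⟨A, hA, hAcard⟩ := hc.exists_isIndepSet_of_notMem_support hmax hv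
  exact hforb _ hκ le_rfl (exists_completeBipartite_of_isIndepSet hdeg hA hAcard (by omega))
end

section
/- Let G be a non-Hamiltonian graph with κ(G) = m(G) = s ≥ 2 and structure as established in the proof: longest cycle C = u₁u₁⁺⋯uₛuₛ⁺u₁, every vertex outside C adjacent exactly to {u₁,...,uₛ}, the set of vertices outside C independent, and uᵢ⁺uⱼ ∈ E for all i,j. Then G satisfies K_{s,s+1} ⊆ G ⊆ K_s ∨ ((n−s)·K_1) where n = |V(G)|, i.e., G ∈ F with p = s and q = n − s ≥ s + 1. -/
open SimpleGraph Finset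

/-!
The cycle `C` has length `2s` and visits the `uᵢ` and the `uᵢ⁺` alternately, so these `2s`
vertices are distinct, make up all of `V(C)`, and together with a vertex `x₀` off `C` span a
copy of `K_{s,s+1}` with sides `{uᵢ}` and `{uᵢ⁺} ∪ {x₀}`; in particular `n ≥ 2s + 1`. An edge
`uᵢ⁺uⱼ⁺` would close, inside this `K_{s,s+1}`, a cycle through all `2s + 1` of its vertices,
longer than `C`. All other edges between vertices outside `{uᵢ}` are excluded by the
hypotheses on `V \ V(C)`.
-/

section

variable {V : Type*} {G : SimpleGraph V}

theorem exists_isPath_of_forall_adj {A B : Finset V} {x a : V} (hAB : Disjoint A B)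
    (hcard : #A = #B + 1) (hadj : ∀ a ∈ A, ∀ b ∈ B, G.Adj a b) (hxA : x ∉ A) (hxB : x ∉ B)
    (hx : ∀ a ∈ A, G.Adj x a) (ha : a ∈ A) :
    ∃ p : G.Walk x a, p.IsPath ∧ p.length = 2 * #B + 1 ∧
      ∀ y ∈ p.support, y = x ∨ y ∈ A ∨ y ∈ B := by
  classical
  induction B using Finset.induction_on generalizing A x with
  | empty =>
    obtain ⟨a', rfl⟩ := card_eq_one.1 hcard
    refine ⟨.cons (hx a ha) .nil, by simpa using (hx a ha).ne, rfl, by simp [mem_singleton.1 ha]⟩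
  | insert b B hbB ih =>
    rw [card_insert_of_notMem hbB] at hcard
    obtain ⟨a', ha'A, ha'a⟩ := exists_mem_ne (by omega : 1 < #A) a
    have hbA : b ∉ A := disjoint_right.1 hAB (mem_insert_self b B)
    have ha'B : a' ∉ insert b B := disjoint_left.1 hAB ha'A
    obtain ⟨q, hq, hqlen, hqsupp⟩ := ih (A := A.erase a') (x := b)
      (disjoint_of_subset_left (erase_subset _ _) (disjoint_insert_right.1 hAB).2)
      (by rw [card_erase_of_mem ha'A]; omega)
      (fun a₁ ha₁ b₁ hb₁ => hadj a₁ (mem_of_mem_erase ha₁) b₁ (mem_insert_of_mem hb₁))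
      (fun h => hbA (mem_of_mem_erase h)) hbB
      (fun a₁ ha₁ => (hadj a₁ (mem_of_mem_erase ha₁) b (mem_insert_self b B)).symm)
      (mem_erase.2 ⟨ha'a.symm, ha⟩)
    refine ⟨.cons (hx a' ha'A) (.cons (hadj a' ha'A b (mem_insert_self b B)) q),
      (hq.cons ?_).cons ?_, by simp [hqlen, card_insert_of_notMem hbB]; ring, ?_⟩ <;> grind

theorem exists_isCycle_of_adj_of_forall_adj {U W : Finset V} (hUW : Disjoint U W)
    (hcard : #W = #U + 1) (hadj : ∀ u ∈ U, ∀ w ∈ W, G.Adj u w) {w₁ w₂ : V} (hw₁ : w₁ ∈ W)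
    (hw₂ : w₂ ∈ W) (h : G.Adj w₁ w₂) :
    ∃ (v : V) (c : G.Walk v v), c.IsCycle ∧ c.length = 2 * #U + 1 := by
  classical
  set B := (W.erase w₁).erase w₂
  have hw₂' : w₂ ∈ W.erase w₁ := mem_erase.2 ⟨h.ne.symm, hw₂⟩
  have hB : #U = #B + 1 := by
    have := card_pos.2 ⟨w₂, hw₂'⟩
    rw [card_erase_of_mem hw₂', card_erase_of_mem hw₁] at *
    omega
  obtain ⟨u₀, hu₀⟩ : U.Nonempty := card_pos.1 (by omega)
  have hBW : B ⊆ W := (erase_subset _ _).trans (erase_subset _ _)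
  -- the cycle `u₀ w₁ w₂ ⋯ u₀`, where `w₂ ⋯ u₀` zigzags through `U` and `W \ {w₁, w₂}`
  obtain ⟨p, hp, hplen, hpsupp⟩ := exists_isPath_of_forall_adj (disjoint_of_subset_right hBW hUW)
    hB (fun u hu b hb => hadj u hu b (hBW hb)) (disjoint_right.1 hUW hw₂) (by simp [B])
    (fun u hu => (hadj u hu w₂ hw₂).symm) hu₀
  have hw₁p : w₁ ∉ p.support := by grind [Finset.disjoint_left]
  refine ⟨u₀, .cons (hadj u₀ hu₀ w₁ hw₁) (.cons h p), ?_, by simp [hplen]; omega⟩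
  refine (Walk.cons_isCycle_iff _ _).2 ⟨hp.cons hw₁p, ?_⟩
  simp only [Walk.edges_cons, List.mem_cons, not_or]
  refine ⟨fun he => ?_, fun he => hw₁p (p.snd_mem_support_of_mem_edges he)⟩
  rcases Sym2.eq_iff.1 he with ⟨-, h'⟩ | ⟨h', -⟩
  exacts [h.ne h', disjoint_left.1 hUW hu₀ (h' ▸ hw₂)]

theorem SimpleGraph.Walk.IsCycle.getVert_inj_of_lt_length {v : V} {c : G.Walk v v}
    (hc : c.IsCycle) {m n : ℕ} (hm : m < c.length) (hn : n < c.length)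
    (h : c.getVert m = c.getVert n) : m = n :=
  hc.getVert_injOn' (by simp only [Set.mem_ofPred_eq]; omega)
    (by simp only [Set.mem_ofPred_eq]; omega) h

theorem SimpleGraph.Walk.exists_getVert_eq_of_mem_support {v x : V} {c : G.Walk v v}
    (hc : ¬ c.Nil) (hx : x ∈ c.support) : ∃ k < c.length, c.getVert k = x := by
  obtain ⟨k, rfl, hk⟩ := Walk.mem_support_iff_exists_getVert.1 hx
  rcases hk.lt_or_eq with hk | rfl
  · exact ⟨k, hk, rfl⟩
  · exact ⟨0, Walk.not_nil_iff_lt_length.1 hc, by simp⟩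

variable {v : V} {c : G.Walk v v} {s : ℕ} {u usucc : Fin s → V}

theorem injective_sumElim_of_isCycle (hc : c.IsCycle) (hlen : c.length = 2 * s)
    (hu : ∀ i : Fin s, c.getVert (2 * ↑i) = u i)
    (husucc : ∀ i : Fin s, c.getVert (2 * ↑i + 1) = usucc i) :
    Function.Injective (Sum.elim u usucc) := by
  rintro (i | i) (j | j) h <;>
    simp only [Sum.elim_inl, Sum.elim_inr, ← hu, ← husucc, Sum.inl.injEq, Sum.inr.injEq,
      reduceCtorEq] at h ⊢ <;>
    have := hc.getVert_inj_of_lt_length (by omega) (by omega) h <;>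
    omega

theorem exists_usucc_eq_of_mem_support (hc : c.IsCycle) (hlen : c.length = 2 * s)
    (hu : ∀ i : Fin s, c.getVert (2 * ↑i) = u i)
    (husucc : ∀ i : Fin s, c.getVert (2 * ↑i + 1) = usucc i) {x : V} (hx : x ∈ c.support)
    (hxu : ∀ j, x ≠ u j) : ∃ i, usucc i = x := by
  obtain ⟨k, hk, rfl⟩ := Walk.exists_getVert_eq_of_mem_support hc.not_nil hx
  obtain ⟨i, rfl | rfl⟩ := Nat.even_or_odd' k
  · exact (hxu ⟨i, by omega⟩ (hu ⟨i, by omega⟩)).elim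
  · exact ⟨⟨i, by omega⟩, (husucc _).symm⟩

theorem exists_completeBipartite_of_isCycle (hc : c.IsCycle) (hlen : c.length = 2 * s)
    (hu : ∀ i : Fin s, c.getVert (2 * ↑i) = u i)
    (husucc : ∀ i : Fin s, c.getVert (2 * ↑i + 1) = usucc i) {x₀ : V} (hx₀ : x₀ ∉ c.support)
    (hx₀adj : ∀ i, G.Adj x₀ (u i)) (hss : ∀ i j, G.Adj (usucc i) (u j)) :
    ∃ U W : Finset V, Disjoint U W ∧ #U = s ∧ #W = s + 1 ∧
      (∀ a ∈ U, ∀ b ∈ W, G.Adj a b) ∧ ∀ i, usucc i ∈ W := by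
  classical
  have hinj := injective_sumElim_of_isCycle hc hlen hu husucc
  have hinj_u : Function.Injective u := hinj.comp Sum.inl_injective
  have hinj_s : Function.Injective usucc := hinj.comp Sum.inr_injective
  have hu_ne (i : Fin s) : u i ≠ x₀ := fun h => hx₀ (h ▸ hu i ▸ c.getVert_mem_support _)
  have hsucc_ne (i : Fin s) : usucc i ≠ x₀ := fun h => hx₀ (h ▸ husucc i ▸ c.getVert_mem_support _)
  have hx₀' : x₀ ∉ univ.image usucc := by simpa using hsucc_ne
  refine ⟨univ.image u, insert x₀ (univ.image usucc), ?_, ?_, ?_, ?_, ?_⟩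
  · simp only [Finset.disjoint_left, mem_image, mem_univ, true_and, mem_insert, not_or, not_exists]
    rintro _ ⟨i, rfl⟩
    exact ⟨hu_ne i, fun j h => Sum.inr_ne_inl (hinj h)⟩
  · rw [card_image_of_injective _ hinj_u]; simp
  · rw [card_insert_of_notMem hx₀', card_image_of_injective _ hinj_s]
    simp
  · simp only [mem_image, mem_univ, true_and, mem_insert]
    rintro _ ⟨i, rfl⟩ _ (rfl | ⟨j, rfl⟩)
    exacts [(hx₀adj i).symm, (hss j i).symm]
  · simp

end

theorem stmt_13_general {V : Type*} [Fintype V] (G : SimpleGraph V)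
    (s : ℕ)
    {v : V} (c : G.Walk v v) (hc : c.IsCycle)
    (hlong : ∀ (w : V) (d : G.Walk w w), d.IsCycle → d.length ≤ c.length)
    (hlen : c.length = 2 * s)
    (u usucc : Fin s → V)
    (hu : ∀ i : Fin s, c.getVert (2 * ↑i) = u i)
    (husucc : ∀ i : Fin s, c.getVert (2 * ↑i + 1) = usucc i)
    (x₀ : V) (hx₀ : x₀ ∉ c.support)
    (hout_adj : ∀ x : V, x ∉ c.support → ∀ i, G.Adj x (u i))
    (hout_only : ∀ x : V, x ∉ c.support → ∀ w, G.Adj x w → ∃ i, w = u i)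
    (hss : ∀ i j : Fin s, G.Adj (usucc i) (u j)) :
    (∀ i : Fin s, ∀ x : V, (∀ j, x ≠ u j) → G.Adj (u i) x) ∧
    (∀ x y : V, (∀ j, x ≠ u j) → (∀ j, y ≠ u j) → ¬ G.Adj x y) ∧
    s + 1 ≤ Fintype.card V - s := by
  classical
  obtain ⟨U, W, hUW, hU, hW, hadj, hsuccW⟩ :=
    exists_completeBipartite_of_isCycle hc hlen hu husucc hx₀ (hout_adj x₀ hx₀) hss
  have hsucc (i j : Fin s) : ¬ G.Adj (usucc i) (usucc j) := fun h => by
    obtain ⟨w, d, hd, hdlen⟩ :=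
      exists_isCycle_of_adj_of_forall_adj hUW (by omega) hadj (hsuccW i) (hsuccW j) h
    have := hlong w d hd
    omega
  have hcases (x : V) (hx : ∀ j, x ≠ u j) : x ∉ c.support ∨ ∃ i, usucc i = x :=
    or_iff_not_imp_left.2 fun hxc =>
      exists_usucc_eq_of_mem_support hc hlen hu husucc (not_not.1 hxc) hx
  refine ⟨fun i x hx => ?_, fun x y hx hy hxy => ?_, ?_⟩
  · rcases hcases x hx with hxc | ⟨j, rfl⟩
    exacts [(hout_adj x hxc i).symm, (hss j i).symm]
  · rcases hcases x hx with hxc | ⟨i, rfl⟩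
    · obtain ⟨j, rfl⟩ := hout_only x hxc y hxy
      exact hy j rfl
    rcases hcases y hy with hyc | ⟨j, rfl⟩
    · obtain ⟨j, hj⟩ := hout_only y hyc _ hxy.symm
      exact hx j hj
    exact hsucc i j hxy
  · have := card_le_univ (U ∪ W)
    rw [card_union_of_disjoint hUW] at this
    omega

/-- With the structure established in the proof, `G` satisfies
`K_{s,s+1} ⊆ G ⊆ K_s ∨ ((n−s)·K_1)`: every vertex outside `{u₁,…,uₛ}` is adjacent to all
the `uᵢ`, the complement of `{u₁,…,uₛ}` is independent, and `n − s ≥ s + 1`;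
i.e. `G ∈ F` with `p = s`, `q = n − s`. -/
theorem stmt_13 {V : Type*} [Fintype V] [DecidableEq V] (G : SimpleGraph V)
    (hnotham : ¬ G.IsHamiltonian)
    (s : ℕ) (hs : 2 ≤ s)
    (hκ : vertexConnectivity G = s) (hm : matchingNumber G = s)
    {v : V} (c : G.Walk v v) (hc : c.IsCycle)
    (hlong : ∀ (w : V) (d : G.Walk w w), d.IsCycle → d.length ≤ c.length)
    (hlen : c.length = 2 * s)
    (u usucc : Fin s → V) (huinj : Function.Injective u)
    (hu : ∀ i : Fin s, c.getVert (2 * ↑i) = u i)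
    (husucc : ∀ i : Fin s, c.getVert (2 * ↑i + 1) = usucc i)
    (x₀ : V) (hx₀ : x₀ ∉ c.support)
    (hadjx₀ : ∀ i, G.Adj x₀ (u i))
    (hout_adj : ∀ x : V, x ∉ c.support → ∀ i, G.Adj x (u i))
    (hout_only : ∀ x : V, x ∉ c.support → ∀ w, G.Adj x w → ∃ i, w = u i)
    (hout_indep : ∀ x y : V, x ∉ c.support → y ∉ c.support → ¬ G.Adj x y)
    (hss : ∀ i j : Fin s, G.Adj (usucc i) (u j)) :
    (∀ i : Fin s, ∀ x : V, (∀ j, x ≠ u j) → G.Adj (u i) x) ∧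
    (∀ x y : V, (∀ j, x ≠ u j) → (∀ j, y ≠ u j) → ¬ G.Adj x y) ∧
    s + 1 ≤ Fintype.card V - s :=
  stmt_13_general G s c hc hlong hlen u usucc hu husucc x₀ hx₀ hout_adj hout_only hss
end
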